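/- arXiv:1409.8389 — 13 statements merged into one kernel-verified Lean document; each statement's English description precedes it below -/
import Mathlib

section
/- Let G be a connected finite unweighted graph with pl(G) ≤ λ. Then for every three vertices u, v, w of G, one of the three (say v) has the property that every path in G connecting the other two vertices (u and w) contains a vertex of the disk D_G(v, λ); equivalently, after removing D_G(v, λ) from G, u and w do not lie in the same connected component (unless one of them lies in the disk). -/
open SimpleGraph

variable {V : Type*}

/-- A path-decomposition of `G`: a finite sequence of bags `X 0, …, X (q-1)` such that
every vertex is in some bag, every edge has both ends in some bag, and
`X i ∩ X k ⊆ X j` whenever `i ≤ j ≤ k`. -/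
def IsPathDecomp (G : SimpleGraph V) {q : ℕ} (X : Fin q → Set V) : Prop :=
  (∀ v : V, ∃ i, v ∈ X i) ∧
  (∀ u v : V, G.Adj u v → ∃ i, u ∈ X i ∧ v ∈ X i) ∧
  (∀ i j k : Fin q, i ≤ j → j ≤ k → X i ∩ X k ⊆ X j)

/-- The length of the path-decomposition `X` is at most `l`:
every two vertices in a common bag are at distance at most `l` in `G`. -/
def DecompLengthLE (G : SimpleGraph V) {q : ℕ} (X : Fin q → Set V) (l : ℕ) : Prop :=
  ∀ i, ∀ u ∈ X i, ∀ v ∈ X i, G.dist u v ≤ l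

/-- The breadth of the path-decomposition `X` is at most `r`:
every bag is contained in a disk of radius `r` of `G`. -/
def DecompBreadthLE (G : SimpleGraph V) {q : ℕ} (X : Fin q → Set V) (r : ℕ) : Prop :=
  ∀ i, ∃ c : V, ∀ u ∈ X i, G.dist c u ≤ r

/-- The path-length `pl(G)`: minimum length over all path-decompositions of `G`. -/
noncomputable def pathLength (G : SimpleGraph V) : ℕ :=
  sInf {l | ∃ (q : ℕ) (X : Fin q → Set V), IsPathDecomp G X ∧ DecompLengthLE G X l}

/-- The path-breadth `pb(G)`: minimum breadth over all path-decompositions of `G`. -/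
noncomputable def pathBreadth (G : SimpleGraph V) : ℕ :=
  sInf {r | ∃ (q : ℕ) (X : Fin q → Set V), IsPathDecomp G X ∧ DecompBreadthLE G X r}

/-- The path-width `pw(G)`: minimum over all path-decompositions of (max bag size − 1). -/
noncomputable def pathWidth (G : SimpleGraph V) : ℕ :=
  sInf {w | ∃ (q : ℕ) (X : Fin q → Set V), IsPathDecomp G X ∧ ∀ i, (X i).ncard ≤ w + 1}

/-- `f` is a non-contractive embedding of `G` into the line with distortion at most `k`. -/
def IsLineEmbedding (G : SimpleGraph V) (k : ℕ) (f : V → ℝ) : Prop :=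
  ∀ x y : V, (G.dist x y : ℝ) ≤ |f x - f y| ∧ |f x - f y| ≤ (k : ℝ) * (G.dist x y : ℝ)

/-- The minimum line-distortion `ld(G)`. -/
noncomputable def lineDistortion (G : SimpleGraph V) : ℕ :=
  sInf {k | ∃ f : V → ℝ, IsLineEmbedding G k f}

/-- The bandwidth `bw(G)`: minimum over all layouts (bijections of the vertices
with `{0, …, n-1}`) of the maximum stretch of an edge. -/
noncomputable def bandwidth (G : SimpleGraph V) [Fintype V] : ℕ :=
  sInf {b | ∃ f : V ≃ Fin (Fintype.card V),
    ∀ u v : V, G.Adj u v → Nat.dist (f u : ℕ) (f v : ℕ) ≤ b}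

/-- Every path of `G` from `a` to `b` meets the disk of radius `lam` around `c`. -/
def Intercepts (G : SimpleGraph V) (lam : ℕ) (c a b : V) : Prop :=
  ∀ p : G.Walk a b, p.IsPath → ∃ z ∈ p.support, G.dist c z ≤ lam

/-- The walk `p` avoids the closed neighborhood of `c`. -/
def WalkAvoids (G : SimpleGraph V) {x y : V} (p : G.Walk x y) (c : V) : Prop :=
  ∀ z ∈ p.support, z ≠ c ∧ ¬ G.Adj c z

/-- `a, b, c` form an asteroidal triple of `G`: pairwise non-adjacent, and every two
of them are joined by a path avoiding the closed neighborhood of the third. -/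
def IsAsteroidalTriple (G : SimpleGraph V) (a b c : V) : Prop :=
  a ≠ b ∧ a ≠ c ∧ b ≠ c ∧ ¬ G.Adj a b ∧ ¬ G.Adj a c ∧ ¬ G.Adj b c ∧
  (∃ p : G.Walk a b, p.IsPath ∧ WalkAvoids G p c) ∧
  (∃ p : G.Walk a c, p.IsPath ∧ WalkAvoids G p b) ∧
  (∃ p : G.Walk b c, p.IsPath ∧ WalkAvoids G p a)

/-- `G` is AT-free: it has no asteroidal triple. -/
def ATFree (G : SimpleGraph V) : Prop :=
  ∀ a b c : V, ¬ IsAsteroidalTriple G a b c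

lemma meets_bag {G : SimpleGraph V} {q : ℕ} {X : Fin q → Set V}
    (hX : ∀ u v : V, G.Adj u v → ∃ i, u ∈ X i ∧ v ∈ X i)
    (hX3 : ∀ i j k : Fin q, i ≤ j → j ≤ k → X i ∩ X k ⊆ X j)
    {x y : V} (p : G.Walk x y) (m : Fin q) :
    ∀ i j : Fin q, i ≤ m → m ≤ j → x ∈ X i → y ∈ X j → ∃ z ∈ p.support, z ∈ X m := by
  induction p with
  | nil =>
    intro i j him hmj hx hy
    exact ⟨_, by simp, hX3 i m j him hmj ⟨hx, hy⟩⟩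
  | cons h p ih =>
    intro i j him hmj hx hy
    obtain ⟨k, hk1, hk2⟩ := hX _ _ h
    rcases le_total m k with hmk | hkm
    · exact ⟨_, by simp, hX3 i m k him hmk ⟨hx, hk1⟩⟩
    · obtain ⟨z, hz, hzm⟩ := ih k j hkm hmj hk2 hy
      exact ⟨z, by simp [hz], hzm⟩

theorem stmt0 [Fintype V] (G : SimpleGraph V) (hG : G.Connected) (lam : ℕ)
    (hpl : pathLength G ≤ lam) (u v w : V) :
    Intercepts G lam v u w ∨ Intercepts G lam u v w ∨ Intercepts G lam w u v := by
  classical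
  -- The set defining pathLength is nonempty
  have hne : {l | ∃ (q : ℕ) (X : Fin q → Set V), IsPathDecomp G X ∧ DecompLengthLE G X l}.Nonempty := by
    refine ⟨(Finset.univ : Finset (V × V)).sup (fun p => G.dist p.1 p.2), 1,
      fun _ => Set.univ, ⟨fun v => ⟨0, trivial⟩, fun a b _ => ⟨0, trivial, trivial⟩,
        fun i j k _ _ => Set.inter_subset_left.trans (by exact fun _ _ => trivial)⟩, ?_⟩
    intro i a _ b _
    exact Finset.le_sup (f := fun p : V × V => G.dist p.1 p.2) (Finset.mem_univ (a, b))
  have hmem := Nat.sInf_mem hne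
  obtain ⟨q, X, ⟨hX1, hX2, hX3⟩, hlen⟩ := hmem
  obtain ⟨iu, hu⟩ := hX1 u
  obtain ⟨iv, hv⟩ := hX1 v
  obtain ⟨iw, hw⟩ := hX1 w
  have key : ∀ (c a b : V) (ic ia ib : Fin q), c ∈ X ic → a ∈ X ia → b ∈ X ib →
      ia ≤ ic → ic ≤ ib → Intercepts G lam c a b := by
    intro c a b ic ia ib hc ha hb h1 h2 p _
    obtain ⟨z, hz, hzm⟩ := meets_bag hX2 hX3 p ic ia ib h1 h2 ha hb
    exact ⟨z, hz, le_trans (hlen ic c hc z hzm) hpl⟩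
  have key2 : ∀ (c a b : V) (ic ia ib : Fin q), c ∈ X ic → a ∈ X ia → b ∈ X ib →
      ib ≤ ic → ic ≤ ia → Intercepts G lam c a b := by
    intro c a b ic ia ib hc ha hb h1 h2 p hp
    obtain ⟨z, hz, hzl⟩ := key c b a ic ib ia hc hb ha h1 h2 p.reverse hp.reverse
    exact ⟨z, by simpa using hz, hzl⟩
  rcases le_total iu iv with h1 | h1 <;> rcases le_total iv iw with h2 | h2
  · exact Or.inl (key v u w iv iu iw hv hu hw h1 h2)
  · rcases le_total iu iw with h3 | h3
    · exact Or.inr (Or.inr (key w u v iw iu iv hw hu hv h3 h2))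
    · exact Or.inr (Or.inl (key2 u v w iu iv iw hu hv hw h3 h1))
  · rcases le_total iu iw with h3 | h3
    · exact Or.inr (Or.inl (key u v w iu iv iw hu hv hw h1 h3))
    · exact Or.inr (Or.inr (key2 w u v iw iu iv hw hu hv h2 h3))
  · exact Or.inl (key2 v u w iv iu iw hv hu hw h2 h1)
end

section
/- Every connected finite unweighted graph G with pl(G) ≤ λ has a λ-dominating pair, i.e., there exist vertices x, y such that every path of G between x and y is a λ-dominating path of G. -/
open SimpleGraph

variable {V : Type*}

theorem stmt1 [Fintype V] (G : SimpleGraph V) (hG : G.Connected) (lam : ℕ)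
    (hpl : pathLength G ≤ lam) :
    ∃ x y : V, ∀ p : G.Walk x y, p.IsPath →
      ∀ v : V, ∃ z ∈ p.support, G.dist v z ≤ lam := by
  classical
  have hVne : Nonempty V := hG.nonempty
  have hne : {l | ∃ (q : ℕ) (X : Fin q → Set V),
      IsPathDecomp G X ∧ DecompLengthLE G X l}.Nonempty := by
    refine ⟨Finset.univ.sup (fun p : V × V => G.dist p.1 p.2), 1, fun _ => Set.univ,
      ⟨fun v => ⟨0, trivial⟩, fun u v _ => ⟨0, trivial, trivial⟩,
        fun _ _ _ _ _ _ _ => trivial⟩,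
      fun i u _ v _ => Finset.le_sup (f := fun p : V × V => G.dist p.1 p.2)
        (Finset.mem_univ (u, v))⟩
  obtain ⟨q, X, hdec, hlen⟩ := Nat.sInf_mem hne
  have hlen' : DecompLengthLE G X lam := fun i u hu v hv => le_trans (hlen i u hu v hv) hpl
  obtain ⟨hcov, hedge, hinterp⟩ := hdec
  set S : V → Finset (Fin q) := fun u => Finset.univ.filter (fun i => u ∈ X i) with hS
  have hSne : ∀ u, (S u).Nonempty := fun u => by
    obtain ⟨i, hi⟩ := hcov u
    exact ⟨i, by simp [hS, hi]⟩
  set fst : V → Fin q := fun u => (S u).min' (hSne u) with hfst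
  set lst : V → Fin q := fun u => (S u).max' (hSne u) with hlst
  have hmemS : ∀ u i, i ∈ S u ↔ u ∈ X i := fun u i => by simp [hS]
  have hfst_mem : ∀ u, u ∈ X (fst u) := fun u => (hmemS u _).1 ((S u).min'_mem (hSne u))
  have hlst_mem : ∀ u, u ∈ X (lst u) := fun u => (hmemS u _).1 ((S u).max'_mem (hSne u))
  have hint : ∀ u (j : Fin q), fst u ≤ j → j ≤ lst u → u ∈ X j := fun u j h1 h2 =>
    hinterp _ _ _ h1 h2 ⟨hfst_mem u, hlst_mem u⟩
  have hfst_le : ∀ u (j : Fin q), u ∈ X j → fst u ≤ j := fun u j h =>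
    (S u).min'_le j ((hmemS u j).2 h)
  have hle_lst : ∀ u (j : Fin q), u ∈ X j → j ≤ lst u := fun u j h =>
    (S u).le_max' j ((hmemS u j).2 h)
  obtain ⟨x, -, hx⟩ := Finset.exists_min_image Finset.univ fst
    ⟨Classical.arbitrary V, Finset.mem_univ _⟩
  obtain ⟨y, -, hy⟩ := Finset.exists_max_image Finset.univ lst
    ⟨Classical.arbitrary V, Finset.mem_univ _⟩
  have key : ∀ (a b : V) (p : G.Walk a b) (j : Fin q), fst a ≤ j → j ≤ lst b →
      ∃ z ∈ p.support, z ∈ X j := by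
    intro a b p
    induction p with
    | nil =>
      intro j h1 h2
      exact ⟨_, by simp, hint _ j h1 h2⟩
    | @cons u w b hadj p ih =>
      intro j h1 h2
      by_cases hj : j ≤ lst u
      · exact ⟨u, by simp, hint u j h1 hj⟩
      · obtain ⟨m, hm1, hm2⟩ := hedge u w hadj
        have hw : fst w ≤ j := le_trans (hfst_le w m hm2)
          (le_trans (hle_lst u m hm1) (le_of_not_ge hj))
        obtain ⟨z, hz1, hz2⟩ := ih j hw h2
        exact ⟨z, by simp [hz1], hz2⟩
  refine ⟨x, y, fun p _ v => ?_⟩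
  obtain ⟨j, hj⟩ := hcov v
  obtain ⟨z, hz1, hz2⟩ := key x y p j
    (le_trans (hx v (Finset.mem_univ v)) (hfst_le v j hj))
    (le_trans (hle_lst v j hj) (hy v (Finset.mem_univ v)))
  exact ⟨z, hz1, hlen' j v hj z hz2⟩
end

section
/- Let G be a connected finite unweighted graph, let s be an arbitrary vertex of G, let x be a vertex at maximum distance from s, and let y be a vertex at maximum distance from x. Then x, y is a (2·pl(G))-dominating pair of G, i.e., every path of G between x and y is a 2·pl(G)-dominating path. -/
open SimpleGraph

variable {V : Type*}

section Aux

variable {G : SimpleGraph V}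

private lemma cross_lemma {ι : Type*} [LinearOrder ι] {X : ι → Set V}
    (h2 : ∀ u v : V, G.Adj u v → ∃ i, u ∈ X i ∧ v ∈ X i)
    (h3 : ∀ i j k : ι, i ≤ j → j ≤ k → X i ∩ X k ⊆ X j)
    {u u' : V} (p : G.Walk u u') {j : ι} :
    ∀ (i k : ι), u ∈ X i → u' ∈ X k → i ≤ j → j ≤ k →
      ∃ w ∈ p.support, w ∈ X j := by
  induction p with
  | nil =>
    intro i k hi hk hij hjk
    exact ⟨_, by simp, h3 i j k hij hjk ⟨hi, hk⟩⟩
  | @cons a b c hadj q ih =>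
    intro i k hi hk hij hjk
    obtain ⟨t, hat, hbt⟩ := h2 _ _ hadj
    by_cases hjt : j ≤ t
    · exact ⟨a, by simp, h3 i j t hij hjt ⟨hi, hat⟩⟩
    · obtain ⟨w, hw, hwX⟩ := ih t k hbt hk (le_of_not_ge hjt) hjk
      exact ⟨w, by simp [hw], hwX⟩

private lemma dist_split {u u' w : V} (W : G.Walk u u') (hlen : W.length = G.dist u u')
    (hw : w ∈ W.support) : G.dist u w + G.dist w u' ≤ G.dist u u' := by
  classical
  have h1 : G.dist u w ≤ (W.takeUntil w hw).length := SimpleGraph.dist_le _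
  have h2 : G.dist w u' ≤ (W.dropUntil w hw).length := SimpleGraph.dist_le _
  have h3 : (W.takeUntil w hw).length + (W.dropUntil w hw).length = W.length := by
    rw [← SimpleGraph.Walk.length_append, SimpleGraph.Walk.take_spec]
  omega

private lemma oneSided {ι : Type*} [LinearOrder ι] {X : ι → Set V}
    (hG : G.Connected)
    (h1 : ∀ v : V, ∃ i, v ∈ X i)
    (h2 : ∀ u v : V, G.Adj u v → ∃ i, u ∈ X i ∧ v ∈ X i)
    (h3 : ∀ i j k : ι, i ≤ j → j ≤ k → X i ∩ X k ⊆ X j)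
    {L : ℕ} (hlen : ∀ i, ∀ a ∈ X i, ∀ b ∈ X i, G.dist a b ≤ L)
    (s x y v : V)
    (hx : ∀ z : V, G.dist s z ≤ G.dist s x)
    (hy : ∀ z : V, G.dist x z ≤ G.dist x y)
    (p : G.Walk x y)
    (hside : ∀ (j k : ι) (z : V), v ∈ X j → z ∈ p.support → z ∈ X k → j ≤ k) :
    ∃ z ∈ p.support, G.dist v z ≤ 2 * L := by
  obtain ⟨iv, hiv⟩ := h1 v
  obtain ⟨ix, hix⟩ := h1 x
  obtain ⟨iy, hiy⟩ := h1 y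
  have hvx : iv ≤ ix := hside iv ix x hiv p.start_mem_support hix
  have hvy : iv ≤ iy := hside iv iy y hiv p.end_mem_support hiy
  by_cases hc : ∃ kx, x ∈ X kx ∧ iy ≤ kx
  · -- case (a): x has a bag to the right of a bag of y
    obtain ⟨kx, hxkx, hykx⟩ := hc
    obtain ⟨W, hW⟩ := hG.exists_walk_length_eq_dist v x
    obtain ⟨a, haW, haX⟩ := cross_lemma h2 h3 W iv kx hiv hxkx hvy hykx
    have hsplit : G.dist v a + G.dist a x ≤ G.dist v x := dist_split W hW haW
    have hay : G.dist a y ≤ L := hlen iy a haX y hiy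
    have htri : G.dist x y ≤ G.dist x a + G.dist a y := hG.dist_triangle
    have hxv : G.dist x v ≤ G.dist x y := hy v
    have c1 : G.dist v a = G.dist a v := SimpleGraph.dist_comm
    have c2 : G.dist a x = G.dist x a := SimpleGraph.dist_comm
    have c3 : G.dist v x = G.dist x v := SimpleGraph.dist_comm
    have hav : G.dist a v ≤ L := by omega
    have htri2 : G.dist v y ≤ G.dist v a + G.dist a y := hG.dist_triangle
    exact ⟨y, p.end_mem_support, by omega⟩
  · push_neg at hc
    have hxy : ix ≤ iy := (hc ix hix).le
    by_cases hs : ∃ t, s ∈ X t ∧ ix ≤ t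
    · -- case (b1): s has a bag to the right of a bag of x
      obtain ⟨t, hst, hts⟩ := hs
      obtain ⟨W, hW⟩ := hG.exists_walk_length_eq_dist v s
      obtain ⟨w3, hw3W, hw3X⟩ := cross_lemma h2 h3 W iv t hiv hst hvx hts
      have hsplit : G.dist v w3 + G.dist w3 s ≤ G.dist v s := dist_split W hW hw3W
      have hxv : G.dist s v ≤ G.dist s x := hx v
      have htri : G.dist s x ≤ G.dist s w3 + G.dist w3 x := hG.dist_triangle
      have hw3x : G.dist w3 x ≤ L := hlen ix w3 hw3X x hix
      have c1 : G.dist v s = G.dist s v := SimpleGraph.dist_comm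
      have c2 : G.dist w3 s = G.dist s w3 := SimpleGraph.dist_comm
      have htri2 : G.dist v x ≤ G.dist v w3 + G.dist w3 x := hG.dist_triangle
      exact ⟨x, p.start_mem_support, by omega⟩
    · -- case (b2): all bags of s are to the left of every bag of x
      push_neg at hs
      obtain ⟨is, his⟩ := h1 s
      have hsix : is ≤ ix := (hs is his).le
      obtain ⟨W, hW⟩ := hG.exists_walk_length_eq_dist s y
      obtain ⟨w2, hw2W, hw2X⟩ := cross_lemma h2 h3 W is iy his hiy hsix hxy
      have hsplit : G.dist s w2 + G.dist w2 y ≤ G.dist s y := dist_split W hW hw2W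
      have hsy : G.dist s y ≤ G.dist s x := hx y
      have htri : G.dist s x ≤ G.dist s w2 + G.dist w2 x := hG.dist_triangle
      have hw2x : G.dist w2 x ≤ L := hlen ix w2 hw2X x hix
      have hw2y : G.dist w2 y ≤ L := by omega
      have hxv : G.dist x v ≤ G.dist x y := hy v
      have htri2 : G.dist x y ≤ G.dist x w2 + G.dist w2 y := hG.dist_triangle
      have hxw2 : G.dist x w2 ≤ L := hlen ix x hix w2 hw2X
      have c1 : G.dist v x = G.dist x v := SimpleGraph.dist_comm
      exact ⟨x, p.start_mem_support, by omega⟩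

private lemma side_dichotomy {q : ℕ} {X : Fin q → Set V}
    (h2 : ∀ u v : V, G.Adj u v → ∃ i, u ∈ X i ∧ v ∈ X i)
    (h3 : ∀ i j k : Fin q, i ≤ j → j ≤ k → X i ∩ X k ⊆ X j)
    {x y v : V} (p : G.Walk x y)
    (hA : ¬ ∃ z ∈ p.support, ∃ j, v ∈ X j ∧ z ∈ X j) :
    (∀ (j k : Fin q) (z : V), v ∈ X j → z ∈ p.support → z ∈ X k → j ≤ k) ∨
    (∀ (j k : Fin q) (z : V), v ∈ X j → z ∈ p.support → z ∈ X k → k ≤ j) := by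
  classical
  by_contra hcon
  push_neg at hcon
  obtain ⟨⟨j, k, z, hvj, hz, hzk, hkj⟩, ⟨j', k', z', hvj', hz', hzk', hjk'⟩⟩ := hcon
  rcases le_or_gt k' j with hk'j | hjk2
  · exact hA ⟨z', hz', k', h3 j' k' j hjk'.le hk'j ⟨hvj', hvj⟩, hzk'⟩
  · have hW : ∃ w ∈ p.support, w ∈ X j := by
      set W : G.Walk z z' := (p.takeUntil z hz).reverse.append (p.takeUntil z' hz') with hWdef
      obtain ⟨w, hwW, hwX⟩ := cross_lemma h2 h3 W k k' hzk hzk' hkj.le hjk2.le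
      refine ⟨w, ?_, hwX⟩
      rw [hWdef, SimpleGraph.Walk.mem_support_append_iff] at hwW
      rcases hwW with hwW | hwW
      · rw [SimpleGraph.Walk.support_reverse, List.mem_reverse] at hwW
        exact p.support_takeUntil_subset hz hwW
      · exact p.support_takeUntil_subset hz' hwW
    obtain ⟨w, hwp, hwX⟩ := hW
    exact hA ⟨w, hwp, j, hvj, hwX⟩

private lemma exists_pathDecomp_length [Fintype V] (G : SimpleGraph V) :
    ∃ (q : ℕ) (X : Fin q → Set V), IsPathDecomp G X ∧ DecompLengthLE G X (pathLength G) := by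
  classical
  have hne : {l | ∃ (q : ℕ) (X : Fin q → Set V),
      IsPathDecomp G X ∧ DecompLengthLE G X l}.Nonempty := by
    have hb : ∀ u v : V, G.dist u v ≤ Finset.univ.sup (fun uv : V × V => G.dist uv.1 uv.2) := by
      intro u v
      exact Finset.le_sup (f := fun uv : V × V => G.dist uv.1 uv.2) (Finset.mem_univ (u, v))
    refine ⟨Finset.univ.sup (fun uv : V × V => G.dist uv.1 uv.2), 1, fun _ => Set.univ,
      ⟨fun v => ⟨0, trivial⟩, fun u v _ => ⟨0, trivial, trivial⟩,
        fun i j k _ _ z hz => trivial⟩, fun i u _ v _ => hb u v⟩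
  have h := Nat.sInf_mem hne
  rw [Set.mem_setOf_eq] at h
  exact h

end Aux

theorem stmt2 [Fintype V] (G : SimpleGraph V) (hG : G.Connected) (s x y : V)
    (hx : ∀ z : V, G.dist s z ≤ G.dist s x)
    (hy : ∀ z : V, G.dist x z ≤ G.dist x y) :
    ∀ p : G.Walk x y, p.IsPath →
      ∀ v : V, ∃ z ∈ p.support, G.dist v z ≤ 2 * pathLength G := by
  classical
  obtain ⟨q, X, ⟨h1, h2, h3⟩, hlen⟩ := exists_pathDecomp_length G
  intro p hp v
  by_cases hA : ∃ z ∈ p.support, ∃ j, v ∈ X j ∧ z ∈ X j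
  · obtain ⟨z, hz, j, hvj, hzj⟩ := hA
    exact ⟨z, hz, le_trans (hlen j v hvj z hzj) (by omega)⟩
  · rcases side_dichotomy h2 h3 p hA with hside | hside
    · exact oneSided hG h1 h2 h3 hlen s x y v hx hy p hside
    · exact oneSided (ι := (Fin q)ᵒᵈ) hG h1 h2
        (fun i j k hij hjk z hz => h3 k j i hjk hij ⟨hz.2, hz.1⟩)
        hlen s x y v hx hy p (fun j k z a b c => hside j k z a b c)
end

section
/- Let G be a connected finite unweighted graph with pl(G) ≤ λ, where λ ≥ 1. Then the (2λ−1)-power G^{2λ−1} of G is AT-free. -/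
open SimpleGraph

variable {V : Type*}

/-- The `k`-power of `G`: distinct vertices are adjacent iff their distance in `G`
is at most `k`. -/
def powerGraph (G : SimpleGraph V) (k : ℕ) : SimpleGraph V where
  Adj x y := x ≠ y ∧ G.dist x y ≤ k
  symm := by
    constructor
    intro x y h
    exact ⟨h.1.symm, by rw [SimpleGraph.dist_comm]; exact h.2⟩
  loopless := by
    constructor
    intro x h
    exact h.1 rfl


/-!
Take a path-decomposition of length at most `λ` and suppose `a, b, c` is an asteroidal triple of
`G^(2λ-1)`. Order the bags containing `a, b, c`; say the bag `X j` of `b` lies between those of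
`a` and `c`. Replacing each edge of the `G^(2λ-1)`-path from `a` to `c` avoiding `N[b]` by a
shortest path of `G` gives a walk of `G` from `a` to `c` whose vertices are within `λ - 1` of the
original path. This walk crosses the separating bag `X j`, at a vertex within `λ` of `b`; hence the
original path passes within `2λ - 1` of `b`, i.e. through `N[b]`.
-/

theorem Set.mem_uIcc_or_mem_uIcc_or_mem_uIcc {α : Type*} [LinearOrder α] (a b c : α) :
    b ∈ Set.uIcc a c ∨ a ∈ Set.uIcc b c ∨ c ∈ Set.uIcc a b := by
  simp only [Set.mem_uIcc]
  rcases le_total a b with hab | hab <;> rcases le_total b c with hbc | hbc <;>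
    rcases le_total a c with hac | hac <;> tauto

variable {G : SimpleGraph V}

theorem SimpleGraph.Walk.dist_add_dist_le_length {x y z : V} (w : G.Walk x y)
    (hz : z ∈ w.support) : G.dist x z + G.dist z y ≤ w.length := by
  classical
  have hsplit := congrArg Walk.length (w.take_spec hz)
  rw [Walk.length_append] at hsplit
  have := G.dist_le (w.takeUntil z hz)
  have := G.dist_le (w.dropUntil z hz)
  omega

theorem SimpleGraph.Connected.exists_walk_near_powerGraph_walk (hG : G.Connected) {k : ℕ}
    {x y : V} (p : (powerGraph G k).Walk x y) :
    ∃ w : G.Walk x y, ∀ z ∈ w.support, ∃ v ∈ p.support, G.dist z v ≤ k / 2 := by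
  induction p with
  | nil => exact ⟨Walk.nil, fun z hz => ⟨z, by simp_all⟩⟩
  | @cons x u y hxu p ih =>
    obtain ⟨w, hw⟩ := ih
    obtain ⟨g, hg⟩ := hG.exists_walk_length_eq_dist x u
    refine ⟨g.append w, fun z hz => ?_⟩
    rcases (Walk.mem_support_append_iff _ _).1 hz with hz | hz
    · have := g.dist_add_dist_le_length hz
      have := G.dist_comm (u := x) (v := z)
      have : G.dist x u ≤ k := hxu.2
      by_cases hzx : G.dist z x ≤ k / 2
      · exact ⟨x, Walk.start_mem_support _, hzx⟩
      · exact ⟨u, by simp, by omega⟩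
    · obtain ⟨v, hv, hzv⟩ := hw z hz
      exact ⟨v, by simp [hv], hzv⟩

theorem WalkAvoids.lt_dist_of_powerGraph {k : ℕ} {x y m : V} {p : (powerGraph G k).Walk x y}
    (hp : WalkAvoids (powerGraph G k) p m) {v : V} (hv : v ∈ p.support) : k < G.dist m v := by
  by_contra! hle
  exact (hp v hv).2 ⟨(hp v hv).1.symm, hle⟩

namespace IsPathDecomp

variable {q : ℕ} {X : Fin q → Set V}

theorem inter_subset_of_mem_uIcc (hX : IsPathDecomp G X) {i j k : Fin q}
    (hj : j ∈ Set.uIcc i k) : X i ∩ X k ⊆ X j := by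
  rcases Set.mem_uIcc.1 hj with ⟨hij, hjk⟩ | ⟨hkj, hji⟩
  · exact hX.2.2 i j k hij hjk
  · rw [Set.inter_comm]
    exact hX.2.2 k j i hkj hji

theorem exists_mem_support_mem_of_mem_uIcc (hX : IsPathDecomp G X) {x y : V} (w : G.Walk x y)
    {i j k : Fin q} (hx : x ∈ X i) (hy : y ∈ X k) (hj : j ∈ Set.uIcc i k) :
    ∃ z ∈ w.support, z ∈ X j := by
  induction w generalizing i with
  | nil => exact ⟨_, Walk.start_mem_support _, hX.inter_subset_of_mem_uIcc hj ⟨hx, hy⟩⟩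
  | cons hxx' w ih =>
    obtain ⟨m, hxm, hx'm⟩ := hX.2.1 _ _ hxx'
    by_cases hjm : j ∈ Set.uIcc i m
    · exact ⟨_, Walk.start_mem_support _, hX.inter_subset_of_mem_uIcc hjm ⟨hx, hxm⟩⟩
    · obtain ⟨z, hz, hzX⟩ := ih hx'm hy ((Set.uIcc_subset_uIcc_union_uIcc hj).resolve_left hjm)
      exact ⟨z, by simp [hz], hzX⟩

theorem not_walkAvoids_powerGraph (hX : IsPathDecomp G X) (hG : G.Connected) {lam : ℕ}
    (hlen : DecompLengthLE G X lam) {x y m : V} {i j k : Fin q} (hx : x ∈ X i) (hm : m ∈ X j)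
    (hy : y ∈ X k) (hj : j ∈ Set.uIcc i k) (p : (powerGraph G (2 * lam - 1)).Walk x y) :
    ¬ WalkAvoids (powerGraph G (2 * lam - 1)) p m := by
  intro hp
  obtain ⟨w, hw⟩ := hG.exists_walk_near_powerGraph_walk p
  obtain ⟨z, hz, hzX⟩ := hX.exists_mem_support_mem_of_mem_uIcc w hx hy hj
  obtain ⟨v, hv, hzv⟩ := hw z hz
  have hmz : G.dist m z ≤ lam := hlen j m hm z hzX
  have hmv := hp.lt_dist_of_powerGraph hv
  have := hG.dist_triangle (u := m) (v := z) (w := v)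
  omega

end IsPathDecomp

theorem DecompLengthLE.mono {q : ℕ} {X : Fin q → Set V} {l l' : ℕ} (h : DecompLengthLE G X l)
    (hl : l ≤ l') : DecompLengthLE G X l' :=
  fun i u hu v hv => (h i u hu v hv).trans hl

theorem exists_isPathDecomp_decompLengthLE_pathLength [Finite V] (G : SimpleGraph V) :
    ∃ (q : ℕ) (X : Fin q → Set V),
      IsPathDecomp G X ∧ DecompLengthLE G X (pathLength G) := by
  have := Fintype.ofFinite V
  have hD : ∃ (q : ℕ) (X : Fin q → Set V), IsPathDecomp G X ∧
      DecompLengthLE G X (Finset.univ.sup fun e : V × V => G.dist e.1 e.2) :=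
    ⟨1, fun _ => Set.univ,
      ⟨fun _ => ⟨0, trivial⟩, fun _ _ _ => ⟨0, trivial, trivial⟩,
        fun _ _ _ _ _ => Set.subset_univ _⟩,
      fun _ u _ v _ =>
        Finset.le_sup (f := fun e : V × V => G.dist e.1 e.2) (Finset.mem_univ (u, v))⟩
  exact Nat.sInf_mem (s := {l | ∃ (q : ℕ) (X : Fin q → Set V),
    IsPathDecomp G X ∧ DecompLengthLE G X l}) ⟨_, hD⟩

theorem stmt3_general [Fintype V] (G : SimpleGraph V) (hG : G.Connected) (lam : ℕ)
    (hpl : pathLength G ≤ lam) :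
    ATFree (powerGraph G (2 * lam - 1)) := by
  obtain ⟨q, X, hX, hlen⟩ := exists_isPathDecomp_decompLengthLE_pathLength G
  replace hlen := hlen.mono hpl
  intro a b c habc
  obtain ⟨-, -, -, -, -, -, ⟨pab, -, hc⟩, ⟨pac, -, hb⟩, ⟨pbc, -, ha⟩⟩ := habc
  obtain ⟨ia, hia⟩ := hX.1 a
  obtain ⟨ib, hib⟩ := hX.1 b
  obtain ⟨ic, hic⟩ := hX.1 c
  rcases Set.mem_uIcc_or_mem_uIcc_or_mem_uIcc ia ib ic with h | h | h
  · exact hX.not_walkAvoids_powerGraph hG hlen hia hib hic h pac hb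
  · exact hX.not_walkAvoids_powerGraph hG hlen hib hia hic h pbc ha
  · exact hX.not_walkAvoids_powerGraph hG hlen hia hic hib h pab hc

theorem stmt3 [Fintype V] (G : SimpleGraph V) (hG : G.Connected) (lam : ℕ)
    (hlam : 1 ≤ lam) (hpl : pathLength G ≤ lam) :
    ATFree (powerGraph G (2 * lam - 1)) :=
  stmt3_general G hG lam hpl
end

section
/- Let G be a connected finite unweighted graph with pb(G) ≤ ρ. Then every bramble of G is ρ-dominated by some vertex, i.e., for every bramble F = {S_1,…,S_h} of G there exists a vertex v of G such that every set S_i of F contains a vertex u_i with d_G(v, u_i) ≤ ρ. -/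
open SimpleGraph

variable {V : Type*}

/-- A set of vertices is connected if the induced subgraph is connected. -/
def ConnectedSet (G : SimpleGraph V) (S : Set V) : Prop :=
  (G.induce S).Connected

/-- Two vertex sets see each other: they share a vertex or are joined by an edge. -/
def Sees (G : SimpleGraph V) (S T : Set V) : Prop :=
  (S ∩ T).Nonempty ∨ ∃ a ∈ S, ∃ b ∈ T, G.Adj a b

/-- A bramble of `G`: a family of connected vertex sets that pairwise see each other. -/
def IsBramble (G : SimpleGraph V) (F : Set (Set V)) : Prop :=
  (∀ S ∈ F, ConnectedSet G S) ∧ ∀ S ∈ F, ∀ T ∈ F, Sees G S T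

lemma bag_interval {G : SimpleGraph V} {q : ℕ} {X : Fin q → Set V}
    (hX : IsPathDecomp G X) {S : Set V} (hS : ConnectedSet G S)
    {i j k : Fin q} (hij : i ≤ j) (hjk : j ≤ k)
    (hi : (X i ∩ S).Nonempty) (hk : (X k ∩ S).Nonempty) :
    (X j ∩ S).Nonempty := by
  by_contra h
  rw [Set.not_nonempty_iff_eq_empty] at h
  obtain ⟨u, huX, huS⟩ := hi
  obtain ⟨w, hwX, hwS⟩ := hk
  have hside : ∀ v ∈ S, ∀ l, v ∈ X l → l ≠ j := by
    rintro v hv l hl rfl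
    exact absurd (Set.mem_empty_iff_false v).mp (by rw [← h]; exact fun hh => hh ⟨hl, hv⟩)
  have notboth : ∀ v ∈ S, ∀ l l' : Fin q, l < j → j < l' → v ∈ X l → v ∈ X l' → False := by
    intro v hv l l' hl hl' hvl hvl'
    have : v ∈ X j := hX.2.2 l j l' hl.le hl'.le ⟨hvl, hvl'⟩
    have : v ∈ X j ∩ S := ⟨this, hv⟩
    rw [h] at this
    exact this
  have key : ∀ {a b : ↥S} (p : (G.induce S).Walk a b),
      (∃ l, l < j ∧ (a : V) ∈ X l) → ∃ l, l < j ∧ (b : V) ∈ X l := by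
    intro a b p
    induction p with
    | nil => exact id
    | cons hadj p ih =>
      rename_i a c b
      intro ⟨l, hl, hal⟩
      obtain ⟨m, ham, hcm⟩ := hX.2.1 _ _ hadj
      have hmj : m ≠ j := hside _ a.2 m ham
      rcases lt_or_gt_of_ne hmj with hm | hm
      · exact ih ⟨m, hm, hcm⟩
      · exact absurd (notboth _ a.2 l m hl hm hal ham) not_false
  obtain ⟨p⟩ := hS.preconnected ⟨u, huS⟩ ⟨w, hwS⟩
  have hiu : i < j := lt_of_le_of_ne hij (hside u huS i huX)
  have hjw : j < k := lt_of_le_of_ne hjk (fun e => hside w hwS k hwX e.symm)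
  obtain ⟨l, hl, hwl⟩ := key p ⟨i, hiu, huX⟩
  exact notboth w hwS l k hl hjw hwl hwX

theorem stmt4 [Fintype V] (G : SimpleGraph V) (hG : G.Connected) (ρ : ℕ)
    (hpb : pathBreadth G ≤ ρ) (F : Set (Set V)) (hF : IsBramble G F) :
    ∃ v : V, ∀ S ∈ F, ∃ u ∈ S, G.dist v u ≤ ρ := by
  classical
  have hV : Nonempty V := hG.nonempty
  -- the defining set of pathBreadth is nonempty
  have hne : {r | ∃ (q : ℕ) (X : Fin q → Set V), IsPathDecomp G X ∧ DecompBreadthLE G X r}.Nonempty := by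
    obtain ⟨c⟩ := hV
    refine ⟨Finset.univ.sup (fun u => G.dist c u), 1, fun _ => Set.univ, ⟨?_, ?_, ?_⟩, ?_⟩
    · exact fun v => ⟨0, Set.mem_univ v⟩
    · exact fun u v _ => ⟨0, Set.mem_univ u, Set.mem_univ v⟩
    · intro i j k _ _; exact fun x _ => Set.mem_univ x
    · intro i
      exact ⟨c, fun u _ => Finset.le_sup (Finset.mem_univ u)⟩
  obtain ⟨q, X, hX, hBr⟩ := Nat.sInf_mem hne
  have hB : DecompBreadthLE G X ρ := by
    intro i
    obtain ⟨c, hc⟩ := hBr i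
    exact ⟨c, fun u hu => (hc u hu).trans hpb⟩
  rcases F.eq_empty_or_nonempty with rfl | hFne
  · exact ⟨Classical.arbitrary V, fun S hS => absurd hS (Set.notMem_empty S)⟩
  -- each S ∈ F meets some bag
  have hItrace : ∀ S ∈ F, ∃ i, (X i ∩ S).Nonempty := by
    intro S hS
    have : Nonempty ↥S := (hF.1 S hS).nonempty
    obtain ⟨v, hv⟩ := this
    obtain ⟨i, hi⟩ := hX.1 v
    exact ⟨i, v, hi, hv⟩
  have hq : 0 < q := by
    obtain ⟨S, hS⟩ := hFne
    obtain ⟨i, _⟩ := hItrace S hS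
    exact i.pos
  -- pairwise intersection of bag-traces
  have hpair : ∀ S ∈ F, ∀ T ∈ F, ∃ m, (X m ∩ S).Nonempty ∧ (X m ∩ T).Nonempty := by
    intro S hS T hT
    rcases hF.2 S hS T hT with ⟨v, hvS, hvT⟩ | ⟨a, haS, b, hbT, hab⟩
    · obtain ⟨m, hm⟩ := hX.1 v
      exact ⟨m, ⟨v, hm, hvS⟩, ⟨v, hm, hvT⟩⟩
    · obtain ⟨m, ha, hb⟩ := hX.2.1 a b hab
      exact ⟨m, ⟨a, ha, haS⟩, ⟨b, hb, hbT⟩⟩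
  -- Helly: common bag index
  let A : Finset (Fin q) :=
    Finset.univ.filter (fun i => ∀ S ∈ F, ∃ l, i ≤ l ∧ (X l ∩ S).Nonempty)
  have hA0 : (⟨0, hq⟩ : Fin q) ∈ A := by
    simp only [A, Finset.mem_filter, Finset.mem_univ, true_and]
    intro S hS
    obtain ⟨l, hl⟩ := hItrace S hS
    exact ⟨l, Fin.mk_le_of_le_val (Nat.zero_le _), hl⟩
  have hAne : A.Nonempty := ⟨_, hA0⟩
  set i₀ := A.max' hAne with hi₀
  have hQ : ∀ S ∈ F, ∃ l, i₀ ≤ l ∧ (X l ∩ S).Nonempty := by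
    have := A.max'_mem hAne
    simpa only [A, Finset.mem_filter, Finset.mem_univ, true_and] using this
  have hcommon : ∀ S ∈ F, (X i₀ ∩ S).Nonempty := by
    intro S hS
    set B : Finset (Fin q) := Finset.univ.filter (fun i => (X i ∩ S).Nonempty) with hBdef
    have hBne : B.Nonempty := by
      obtain ⟨i, hi⟩ := hItrace S hS
      exact ⟨i, by simp [B, hi]⟩
    set l₀ := B.min' hBne with hl₀
    have hl₀S : (X l₀ ∩ S).Nonempty := by
      have := B.min'_mem hBne
      simpa [B] using this
    have hl₀A : l₀ ∈ A := by
      simp only [A, Finset.mem_filter, Finset.mem_univ, true_and]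
      intro T hT
      obtain ⟨m, hmS, hmT⟩ := hpair S hS T hT
      have : m ∈ B := by simp [B, hmS]
      exact ⟨m, B.min'_le m this, hmT⟩
    have h1 : l₀ ≤ i₀ := A.le_max' l₀ hl₀A
    obtain ⟨l₁, h2, hl₁S⟩ := hQ S hS
    exact bag_interval hX (hF.1 S hS) h1 h2 hl₀S hl₁S
  obtain ⟨c, hc⟩ := hB i₀
  refine ⟨c, fun S hS => ?_⟩
  obtain ⟨u, huX, huS⟩ := hcommon S hS
  exact ⟨u, huS, hc u huX⟩
end

section
/- Let G be a connected finite unweighted graph with pb(G) ≤ ρ, let S be a subset of vertices of G, and let r : S → ℕ be a radius function such that the disks of the family {D_G(x, r(x)) : x ∈ S} pairwise intersect. Then the disks {D_G(x, r(x) + ρ) : x ∈ S} have a nonempty common intersection. -/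
open SimpleGraph

variable {V : Type*}

/-- Along any walk from `u` to `v`, if `u` lies in a bag with index `≤ j` and `v` in a bag
with index `≥ j`, some vertex of the walk lies in bag `j`. -/
lemma walk_hits_bag {G : SimpleGraph V} {q : ℕ} {X : Fin q → Set V}
    (hX : IsPathDecomp G X) {u v : V} (p : G.Walk u v) (j : Fin q)
    (hu : ∃ i, i ≤ j ∧ u ∈ X i) (hv : ∃ k, j ≤ k ∧ v ∈ X k) :
    ∃ w ∈ p.support, w ∈ X j := by
  revert hu
  induction p with
  | nil =>
    intro hu
    obtain ⟨i, hij, hui⟩ := hu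
    obtain ⟨k, hjk, huk⟩ := hv
    exact ⟨_, by simp, hX.2.2 i j k hij hjk ⟨hui, huk⟩⟩
  | cons h p ih =>
    intro hu
    obtain ⟨t, hat, hbt⟩ := hX.2.1 _ _ h
    by_cases htj : j ≤ t
    · obtain ⟨i, hij, hui⟩ := hu
      exact ⟨_, by simp, hX.2.2 i j t hij htj ⟨hui, hat⟩⟩
    · push_neg at htj
      obtain ⟨w, hw, hwj⟩ := ih hv ⟨t, htj.le, hbt⟩
      exact ⟨w, by simp [hw], hwj⟩

/-- Any vertex on a walk from `u` to `v` is within `p.length` of `v` (and of `u`). -/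
lemma dist_le_of_mem_support {G : SimpleGraph V} {u v w : V} {p : G.Walk u v}
    (hw : w ∈ p.support) : G.dist u w ≤ p.length ∧ G.dist w v ≤ p.length := by
  obtain ⟨p₁, p₂, rfl⟩ := SimpleGraph.Walk.mem_support_iff_exists_append.mp hw
  rw [SimpleGraph.Walk.length_append]
  exact ⟨(SimpleGraph.dist_le p₁).trans (Nat.le_add_right _ _),
    (SimpleGraph.dist_le p₂).trans (Nat.le_add_left _ _)⟩

theorem stmt5 [Fintype V] (G : SimpleGraph V) (hG : G.Connected) (ρ : ℕ)
    (hpb : pathBreadth G ≤ ρ) (S : Set V) (r : V → ℕ)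
    (hint : ∀ x ∈ S, ∀ y ∈ S, ∃ z : V, G.dist x z ≤ r x ∧ G.dist y z ≤ r y) :
    ∃ z : V, ∀ x ∈ S, G.dist x z ≤ r x + ρ := by
  classical
  have hne : Nonempty V := hG.nonempty
  obtain ⟨c₀⟩ := hne
  -- extract a path-decomposition of breadth ≤ ρ
  obtain ⟨q, X, hX, hB⟩ :
      ∃ (q : ℕ) (X : Fin q → Set V), IsPathDecomp G X ∧ DecompBreadthLE G X ρ := by
    have hne' : {r | ∃ (q : ℕ) (X : Fin q → Set V),
        IsPathDecomp G X ∧ DecompBreadthLE G X r}.Nonempty := by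
      refine ⟨Finset.univ.sup (fun u => G.dist c₀ u), 1, fun _ => Set.univ,
        ⟨fun v => ⟨0, trivial⟩, fun u v _ => ⟨0, trivial, trivial⟩,
          fun _ _ _ _ _ => fun z hz => hz.1⟩, fun _ => ⟨c₀, fun u _ => ?_⟩⟩
      exact Finset.le_sup (f := fun u => G.dist c₀ u) (Finset.mem_univ u)
    obtain ⟨q, X, h1, h2⟩ := Nat.sInf_mem hne'
    exact ⟨q, X, h1, fun i => (h2 i).imp fun c hc u hu => (hc u hu).trans hpb⟩
  rcases S.eq_empty_or_nonempty with rfl | ⟨x₁, hx₁⟩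
  · exact ⟨c₀, fun x hx => absurd hx (Set.notMem_empty x)⟩
  -- the set of bag indices meeting the disk around `x`
  set I : V → Set (Fin q) := fun x => {i | ∃ w ∈ X i, G.dist x w ≤ r x} with hI
  have hIne : ∀ x : V, (I x).Nonempty := fun x => by
    obtain ⟨i, hi⟩ := hX.1 x
    exact ⟨i, x, hi, by rw [G.dist_self]; exact Nat.zero_le _⟩
  -- each `I x` is an interval
  have hconv : ∀ (x : V) (i j k : Fin q), i ≤ j → j ≤ k → i ∈ I x → k ∈ I x → j ∈ I x := by
    intro x i j k hij hjk ⟨u, hu, hur⟩ ⟨v, hv, hvr⟩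
    obtain ⟨p₁, hp₁⟩ := hG.exists_walk_length_eq_dist u x
    obtain ⟨p₂, hp₂⟩ := hG.exists_walk_length_eq_dist x v
    obtain ⟨w, hw, hwj⟩ := walk_hits_bag hX (p₁.append p₂) j ⟨i, hij, hu⟩ ⟨k, hjk, hv⟩
    refine ⟨w, hwj, ?_⟩
    rcases (SimpleGraph.Walk.mem_support_append_iff _ _).mp hw with h | h
    · have := (dist_le_of_mem_support h).2
      rw [hp₁] at this
      calc G.dist x w = G.dist w x := G.dist_comm
        _ ≤ G.dist u x := this
        _ = G.dist x u := G.dist_comm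
        _ ≤ r x := hur
    · have := (dist_le_of_mem_support h).1
      rw [hp₂] at this
      exact this.trans hvr
  -- choose the minimum of each `I x`
  have hmin : ∀ x : V, ∃ i ∈ I x, ∀ j ∈ I x, i ≤ j := fun x =>
    Set.exists_min_image (I x) id (Set.toFinite _) (hIne x)
  choose m hmI hmle using hmin
  -- maximize `m` over `S`
  obtain ⟨x₀, hx₀S, hx₀max⟩ :=
    Set.exists_max_image S m (Set.toFinite S) ⟨x₁, hx₁⟩
  set j : Fin q := m x₀ with hj
  -- `j` belongs to every `I x`, `x ∈ S`
  have hjI : ∀ x ∈ S, j ∈ I x := by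
    intro x hx
    obtain ⟨z, hxz, hx₀z⟩ := hint x hx x₀ hx₀S
    obtain ⟨t, ht⟩ := hX.1 z
    have htIx : t ∈ I x := ⟨z, ht, hxz⟩
    have htIx₀ : t ∈ I x₀ := ⟨z, ht, hx₀z⟩
    exact hconv x (m x) j t (hx₀max x hx) (hmle x₀ t htIx₀) (hmI x) htIx
  -- the center of bag `j` works
  obtain ⟨c, hc⟩ := hB j
  refine ⟨c, fun x hx => ?_⟩
  obtain ⟨w, hwX, hwr⟩ := hjI x hx
  calc G.dist x c ≤ G.dist x w + G.dist w c := hG.dist_triangle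
    _ ≤ r x + ρ := Nat.add_le_add hwr (G.dist_comm ▸ hc w hwX)
end

section
/- For every connected finite unweighted graph G, the path-length of G is at most its minimum line-distortion: pl(G) ≤ ld(G). -/
open SimpleGraph

variable {V : Type*}

lemma abs_nat_cast_sub_ge_one {a b : ℕ} (h : a ≠ b) : (1 : ℝ) ≤ |(a : ℝ) - b| := by
  rcases h.lt_or_gt with h | h
  · rw [abs_sub_comm, abs_of_nonneg (sub_nonneg.mpr (by exact_mod_cast h.le))]
    have : (a : ℝ) + 1 ≤ b := by exact_mod_cast h
    linarith
  · rw [abs_of_nonneg (sub_nonneg.mpr (by exact_mod_cast h.le))]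
    have : (b : ℝ) + 1 ≤ a := by exact_mod_cast h
    linarith

theorem stmt8 [Fintype V] (G : SimpleGraph V) (hG : G.Connected) :
    pathLength G ≤ lineDistortion G := by
  classical
  set n := Fintype.card V with hn
  have e : V ≃ Fin n := Fintype.equivFin V
  -- the line-distortion set is nonempty
  have hSne : {k | ∃ f : V → ℝ, IsLineEmbedding G k f}.Nonempty := by
    refine ⟨n * n, fun x => ((e x : ℕ) : ℝ) * n, fun x y => ?_⟩
    rcases eq_or_ne x y with rfl | hxy
    · simp
    · have hd1 : 1 ≤ G.dist x y := hG.pos_dist_of_ne hxy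
      have hdn : G.dist x y ≤ n := by
        obtain ⟨p⟩ := hG.preconnected x y
        calc G.dist x y ≤ p.toPath.1.length := SimpleGraph.dist_le _
          _ ≤ n := le_of_lt p.toPath.2.length_lt
      have hne : (e x : ℕ) ≠ (e y : ℕ) := by simp [Fin.val_eq_val, hxy]
      have h1 : (1 : ℝ) ≤ |((e x : ℕ) : ℝ) - ((e y : ℕ) : ℝ)| := abs_nat_cast_sub_ge_one hne
      have hxn : ((e x : ℕ) : ℝ) ≤ n := by exact_mod_cast (e x).2.le
      have hyn : ((e y : ℕ) : ℝ) ≤ n := by exact_mod_cast (e y).2.le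
      have hxn0 : (0:ℝ) ≤ ((e x : ℕ) : ℝ) := by positivity
      have hyn0 : (0:ℝ) ≤ ((e y : ℕ) : ℝ) := by positivity
      have hA : |((e x : ℕ) : ℝ) - ((e y : ℕ) : ℝ)| ≤ n := abs_sub_le_iff.mpr ⟨by linarith, by linarith⟩
      have hrw : |((e x : ℕ) : ℝ) * n - ((e y : ℕ) : ℝ) * n|
          = |((e x : ℕ) : ℝ) - ((e y : ℕ) : ℝ)| * n := by
        rw [← sub_mul, abs_mul, abs_of_nonneg (by positivity : (0:ℝ) ≤ (n:ℝ))]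
      have hdnR : (G.dist x y : ℝ) ≤ n := by exact_mod_cast hdn
      have hd1R : (1 : ℝ) ≤ (G.dist x y : ℝ) := by exact_mod_cast hd1
      have hn0 : (0:ℝ) ≤ (n:ℝ) := by positivity
      constructor
      · rw [hrw]; nlinarith
      · rw [hrw]; push_cast; nlinarith
  -- get an optimal embedding
  have hk : lineDistortion G ∈ {k | ∃ f : V → ℝ, IsLineEmbedding G k f} := Nat.sInf_mem hSne
  obtain ⟨f, hf⟩ := hk
  set k := lineDistortion G with hkdef
  -- sort vertices by f-value
  set g : Fin n → ℝ := f ∘ e.symm with hg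
  set σ := Tuple.sort g with hσ
  set v : Fin n → V := fun i => e.symm (σ i) with hv
  have hmono : Monotone (f ∘ v) := Tuple.monotone_sort g
  have hsurj : Function.Surjective v := e.symm.surjective.comp σ.surjective
  -- bags
  set X : Fin n → Set V := fun i => {x | f (v i) ≤ f x ∧ f x ≤ f (v i) + k} with hX
  have hk0 : (0:ℝ) ≤ (k:ℝ) := by positivity
  apply Nat.sInf_le
  refine ⟨n, X, ⟨?_, ?_, ?_⟩, ?_⟩
  · intro x
    obtain ⟨i, rfl⟩ := hsurj x
    exact ⟨i, le_refl _, by linarith⟩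
  · intro u w huw
    have hdist : G.dist u w = 1 := dist_eq_one_iff_adj.mpr huw
    have hb := (hf u w).2
    rw [hdist] at hb
    push_cast at hb
    rw [mul_one] at hb
    obtain ⟨i, hi⟩ := hsurj u
    obtain ⟨j, hj⟩ := hsurj w
    rcases le_total (f u) (f w) with h | h
    · refine ⟨i, ⟨by rw [hi], by rw [hi]; linarith⟩, ⟨by rw [hi]; exact h, ?_⟩⟩
      rw [hi]
      have := abs_le.mp hb
      linarith [this.2]
    · refine ⟨j, ⟨by rw [hj]; exact h, ?_⟩, ⟨by rw [hj], by rw [hj]; linarith⟩⟩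
      rw [hj]
      have := abs_le.mp hb
      linarith [this.1]
  · intro i j l hij hjl x hx
    obtain ⟨⟨h1, h2⟩, ⟨h3, _⟩⟩ := hx
    have hij' : f (v i) ≤ f (v j) := hmono hij
    have hjl' : f (v j) ≤ f (v l) := hmono hjl
    exact ⟨by linarith, by linarith⟩
  · intro i u hu w hw
    obtain ⟨hu1, hu2⟩ := hu
    obtain ⟨hw1, hw2⟩ := hw
    have habs : |f u - f w| ≤ k := abs_le.mpr ⟨by linarith, by linarith⟩
    have := (hf u w).1
    exact_mod_cast this.trans habs
end

section
/- For every connected finite unweighted graph G, the path-width of G is at most its minimum line-distortion: pw(G) ≤ ld(G). -/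
open SimpleGraph

variable {V : Type*}

/-!
Take a non-contractive embedding `f` of `G` into the line with distortion `k = ld(G)`, list
the vertices by increasing `f`, and give each vertex `v` the bag of all vertices whose image
lies in the window `[f v, f v + k]`. Windows with increasing left ends have the interpolation
property of a path-decomposition, every edge is stretched to length at most `k` and so lies in
the window of its left end, and since distinct vertices land at distance at least `1` apart, a
window of length `k` contains at most `k + 1` of them.
-/

open SimpleGraph Set

section

variable {G : SimpleGraph V}

lemma SimpleGraph.Reachable.dist_lt_card [Fintype V] {u v : V} (h : G.Reachable u v) :
    G.dist u v < Fintype.card V := by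
  obtain ⟨p, hp, hlen⟩ := h.exists_path_of_dist
  exact hlen ▸ hp.length_lt

lemma exists_isLineEmbedding [Fintype V] (hG : G.Connected) :
    ∃ (k : ℕ) (f : V → ℝ), IsLineEmbedding G k f := by
  set n := Fintype.card V
  set e := Fintype.equivFin V
  refine ⟨n * n, fun v => (n : ℝ) * (e v : ℕ), ?_⟩
  intro x y
  rcases eq_or_ne x y with rfl | hxy
  · simp
  have hdist_pos : (1 : ℝ) ≤ G.dist x y := by exact_mod_cast hG.pos_dist_of_ne hxy
  have hdist_le : (G.dist x y : ℝ) ≤ n := by exact_mod_cast (hG x y).dist_lt_card.le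
  have hne : (e x : ℕ) ≠ e y := fun h => hxy (e.injective (Fin.ext h))
  have hgap : (1 : ℝ) ≤ |((e x : ℕ) : ℝ) - (e y : ℕ)| := by
    have : (1 : ℤ) ≤ |((e x : ℕ) : ℤ) - (e y : ℕ)| := Int.one_le_abs (by omega)
    exact_mod_cast this
  have hspread : |((e x : ℕ) : ℝ) - (e y : ℕ)| ≤ n := by
    have : |((e x : ℕ) : ℤ) - (e y : ℕ)| ≤ n := by
      have := (e x).2; have := (e y).2
      rw [abs_sub_le_iff]; omega
    exact_mod_cast this
  rw [← mul_sub, abs_mul, Nat.abs_cast]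
  push_cast
  constructor <;> nlinarith

lemma exists_isLineEmbedding_lineDistortion [Fintype V] (hG : G.Connected) :
    ∃ f, IsLineEmbedding G (lineDistortion G) f := by
  obtain ⟨k, f, hf⟩ := exists_isLineEmbedding hG
  exact Nat.sInf_mem (s := {k | ∃ f, IsLineEmbedding G k f}) ⟨k, f, hf⟩

lemma IsLineEmbedding.one_le_abs_sub {k : ℕ} {f : V → ℝ} (hG : G.Connected) (hf : IsLineEmbedding G k f) :
    Pairwise fun u v => 1 ≤ |f u - f v| := fun u v huv =>
  le_trans (by exact_mod_cast hG.pos_dist_of_ne huv) (hf u v).1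

lemma IsLineEmbedding.abs_sub_le_of_adj {k : ℕ} {f : V → ℝ} (hf : IsLineEmbedding G k f) {u v : V}
    (h : G.Adj u v) : |f u - f v| ≤ k := by
  simpa [dist_eq_one_iff_adj.mpr h] using (hf u v).2

lemma ncard_preimage_Icc_le {f : V → ℝ} (hf : Pairwise fun u v => 1 ≤ |f u - f v|)
    (a : ℝ) (k : ℕ) : (f ⁻¹' Icc a (a + k)).ncard ≤ k + 1 := by
  have hinj : (f ⁻¹' Icc a (a + k)).InjOn fun v => ⌊f v - a⌋ := by
    intro u _ v _ huv
    by_contra hne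
    have := Int.abs_sub_lt_one_of_floor_eq_floor huv
    rw [sub_sub_sub_cancel_right] at this
    exact (hf hne).not_gt this
  have hmaps : MapsTo (fun v => ⌊f v - a⌋) (f ⁻¹' Icc a (a + k))
      (Finset.Icc (0 : ℤ) k : Set ℤ) := by
    rintro v ⟨hlo, hhi⟩
    simp only [Finset.coe_Icc, mem_Icc, Int.floor_nonneg, sub_nonneg, hlo, true_and]
    rw [Int.floor_le_iff]
    push_cast
    linarith
  calc (f ⁻¹' Icc a (a + k)).ncard
      ≤ ((Finset.Icc (0 : ℤ) k : Finset ℤ) : Set ℤ).ncard :=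
        ncard_le_ncard_of_injOn _ hmaps hinj
    _ = k + 1 := by rw [ncard_coe_finset]; simp

lemma exists_surjective_monotone_comp [Fintype V] {β : Type*} [LinearOrder β] (f : V → β) :
    ∃ σ : Fin (Fintype.card V) → V, Function.Surjective σ ∧ Monotone (f ∘ σ) := by
  set e := Fintype.equivFin V
  refine ⟨e.symm ∘ Tuple.sort (f ∘ e.symm), ?_, Tuple.monotone_sort (f ∘ e.symm)⟩
  exact e.symm.surjective.comp (Tuple.sort _).surjective

lemma isPathDecomp_preimage_Icc {f : V → ℝ} {k : ℝ} (hk : 0 ≤ k)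
    (hadj : ∀ u v, G.Adj u v → |f u - f v| ≤ k) {q : ℕ} {σ : Fin q → V}
    (hσ : Function.Surjective σ) (hmono : Monotone (f ∘ σ)) :
    IsPathDecomp G fun i => f ⁻¹' Icc (f (σ i)) (f (σ i) + k) := by
  refine ⟨fun v => ?_, fun u v huv => ?_, fun i j l hij hjl v ⟨⟨hi, hi'⟩, ⟨hl, hl'⟩⟩ => ?_⟩
  · obtain ⟨i, rfl⟩ := hσ v
    exact ⟨i, le_rfl, le_add_of_nonneg_right hk⟩
  · have hlen := abs_sub_le_iff.mp (hadj u v huv)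
    rcases le_total (f u) (f v) with huv' | hvu
    · obtain ⟨i, rfl⟩ := hσ u
      exact ⟨i, ⟨le_rfl, by linarith⟩, ⟨huv', by linarith⟩⟩
    · obtain ⟨i, rfl⟩ := hσ v
      exact ⟨i, ⟨hvu, by linarith⟩, ⟨le_rfl, by linarith⟩⟩
  · have hij' : f (σ i) ≤ f (σ j) := hmono hij
    have hjl' : f (σ j) ≤ f (σ l) := hmono hjl
    exact ⟨by linarith, by linarith⟩

lemma pathWidth_le_of_isLineEmbedding [Fintype V] {k : ℕ} {f : V → ℝ}
    (hG : G.Connected) (hf : IsLineEmbedding G k f) : pathWidth G ≤ k := by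
  obtain ⟨σ, hσ, hmono⟩ := exists_surjective_monotone_comp f
  exact Nat.sInf_le ⟨_, _, isPathDecomp_preimage_Icc k.cast_nonneg
    (fun _ _ => hf.abs_sub_le_of_adj) hσ hmono,
    fun i => ncard_preimage_Icc_le (hf.one_le_abs_sub hG) _ k⟩

end

theorem stmt9 [Fintype V] (G : SimpleGraph V) (hG : G.Connected) :
    pathWidth G ≤ lineDistortion G := by
  obtain ⟨f, hf⟩ := exists_isLineEmbedding_lineDistortion hG
  exact pathWidth_le_of_isLineEmbedding hG hf
end

section
/- For every connected finite unweighted graph G, the path-breadth of G is at most ⌈ld(G)/2⌉, where ld(G) is the minimum line-distortion of G. -/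
open SimpleGraph

variable {V : Type*}

/-- Key arithmetic lemma: if `ab` is an edge whose `f`-span contains `f u`, then
`u` is within `⌈k/2⌉` of `a`. -/
lemma key_dist {G : SimpleGraph V} (hG : G.Connected) {k : ℕ} {f : V → ℝ}
    (hf : IsLineEmbedding G k f) {a b u : V} (hab : G.Adj a b)
    (h1 : f a ≤ f u) (h2 : f u ≤ f b) : G.dist a u ≤ (k + 1) / 2 := by
  have hd1 : (G.dist a u : ℝ) ≤ f u - f a := by
    have := (hf a u).1
    rwa [abs_sub_comm, abs_of_nonneg (sub_nonneg.2 h1)] at this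
  have hd2 : (G.dist b u : ℝ) ≤ f b - f u := by
    have := (hf b u).1
    rwa [abs_of_nonneg (sub_nonneg.2 h2)] at this
  have hab1 : G.dist a b = 1 := SimpleGraph.dist_eq_one_iff_adj.2 hab
  have hfb : f b - f a ≤ (k : ℝ) := by
    have := (hf a b).2
    rw [hab1] at this
    rw [abs_sub_comm, abs_of_nonneg (sub_nonneg.2 (h1.trans h2))] at this
    simpa using this
  have htri : G.dist a u ≤ G.dist a b + G.dist b u := hG.dist_triangle
  have htri' : (G.dist a u : ℝ) ≤ 1 + (G.dist b u : ℝ) := by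
    rw [hab1] at htri; exact_mod_cast htri
  have h2d : ((2 * G.dist a u : ℕ) : ℝ) ≤ (k : ℝ) + 1 := by push_cast; linarith
  have h2d' : 2 * G.dist a u ≤ k + 1 := by exact_mod_cast h2d
  omega

/-- From any line embedding with distortion `k` we get a path-decomposition of
breadth at most `⌈k/2⌉`. -/
lemma exists_decomp [Fintype V] (G : SimpleGraph V) (hG : G.Connected)
    (k : ℕ) (f : V → ℝ) (hf : IsLineEmbedding G k f) :
    ∃ (q : ℕ) (X : Fin q → Set V), IsPathDecomp G X ∧ DecompBreadthLE G X ((k + 1) / 2) := by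
  classical
  have hinj : Function.Injective f := by
    intro x y hxy
    by_contra hne
    have h1 : 0 < G.dist x y := hG.pos_dist_of_ne hne
    have h2 := (hf x y).1
    rw [hxy, sub_self, abs_zero] at h2
    have : (0 : ℝ) < G.dist x y := by exact_mod_cast h1
    linarith
  letI : LinearOrder V := LinearOrder.lift' f hinj
  have hle : ∀ a b : V, a ≤ b ↔ f a ≤ f b := fun _ _ => Iff.rfl
  let o := monoEquivOfFin V rfl
  have hmono : ∀ i j : Fin (Fintype.card V), i ≤ j → f (o i) ≤ f (o j) := by
    intro i j hij
    exact (hle _ _).1 (o.monotone hij)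
  refine ⟨Fintype.card V, fun i => {u | f (o i) ≤ f u ∧ (f u ≤ f (o i) ∨
    ∃ a b, G.Adj a b ∧ f a ≤ f (o i) ∧ f (o i) ≤ f b ∧ f u ≤ f b)}, ⟨?_, ?_, ?_⟩, ?_⟩
  · -- every vertex in some bag
    intro v
    refine ⟨o.symm v, ?_⟩
    simp only [Set.mem_setOf_eq, OrderIso.apply_symm_apply]
    exact ⟨le_rfl, Or.inl le_rfl⟩
  · -- every edge in some bag
    intro u v huv
    rcases le_total (f u) (f v) with h | h
    · refine ⟨o.symm u, ?_, ?_⟩ <;>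
        simp only [Set.mem_setOf_eq, OrderIso.apply_symm_apply]
      · exact ⟨le_rfl, Or.inl le_rfl⟩
      · exact ⟨h, Or.inr ⟨u, v, huv, le_rfl, h, le_rfl⟩⟩
    · refine ⟨o.symm v, ?_, ?_⟩ <;>
        simp only [Set.mem_setOf_eq, OrderIso.apply_symm_apply]
      · exact ⟨h, Or.inr ⟨v, u, huv.symm, le_rfl, h, le_rfl⟩⟩
      · exact ⟨le_rfl, Or.inl le_rfl⟩
  · -- interval property
    intro i j k' hij hjk u hu
    obtain ⟨⟨hi1, hi2⟩, ⟨hk1, _⟩⟩ := hu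
    refine ⟨(hmono _ _ hjk).trans hk1, ?_⟩
    rcases hi2 with h | ⟨a, b, hab, ha, hb, hub⟩
    · exact Or.inl (((hmono _ _ hjk).trans hk1).antisymm
        (h.trans (hmono _ _ hij))).ge
    · exact Or.inr ⟨a, b, hab, ha.trans (hmono _ _ hij),
        ((hmono _ _ hjk).trans hk1).trans hub, hub⟩
  · -- breadth
    intro i
    set w := o i with hw
    set F : Finset (V × V) :=
      Finset.univ.filter (fun p => G.Adj p.1 p.2 ∧ f p.1 ≤ f w ∧ f w ≤ f p.2) with hF
    by_cases hFne : F.Nonempty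
    · obtain ⟨p, hpF, hmax⟩ := F.exists_max_image (fun p => f p.2) hFne
      rw [hF, Finset.mem_filter] at hpF
      obtain ⟨-, hadj, hp1, hp2⟩ := hpF
      refine ⟨p.1, fun u hu => ?_⟩
      obtain ⟨hu1, hu2⟩ := hu
      have h1 : f p.1 ≤ f u := hp1.trans hu1
      have h2 : f u ≤ f p.2 := by
        rcases hu2 with h | ⟨a, b, hab, ha, hb, hub⟩
        · exact h.trans hp2
        · have hbF : (a, b) ∈ F := by
            rw [hF, Finset.mem_filter]
            exact ⟨Finset.mem_univ _, hab, ha, hb⟩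
          exact hub.trans (hmax _ hbF)
      exact key_dist hG hf hadj h1 h2
    · refine ⟨w, fun u hu => ?_⟩
      obtain ⟨hu1, hu2⟩ := hu
      rcases hu2 with h | ⟨a, b, hab, ha, hb, hub⟩
      · have : u = w := hinj (le_antisymm h hu1)
        subst this
        simp [SimpleGraph.dist_self]
      · exfalso
        apply hFne
        refine ⟨(a, b), ?_⟩
        rw [hF, Finset.mem_filter]
        exact ⟨Finset.mem_univ _, hab, ha, hb⟩

/-- Every connected finite graph admits some line embedding. -/
lemma exists_embedding [Fintype V] (G : SimpleGraph V) (hG : G.Connected) :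
    ∃ (k : ℕ) (f : V → ℝ), IsLineEmbedding G k f := by
  classical
  have : Nonempty V := hG.nonempty
  set n := Fintype.card V with hn
  set e := Fintype.equivFin V with he
  set D := Finset.univ.sup (fun p : V × V => G.dist p.1 p.2) with hD
  refine ⟨(D + 1) * n, fun v => ((D : ℝ) + 1) * ((e v : ℕ) : ℝ), ?_⟩
  intro x y
  by_cases hxy : x = y
  · subst hxy
    constructor <;> simp [SimpleGraph.dist_self]
  · have hdpos : 1 ≤ G.dist x y := hG.pos_dist_of_ne hxy
    have hdpos' : (1 : ℝ) ≤ G.dist x y := by exact_mod_cast hdpos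
    have hdD : G.dist x y ≤ D :=
      Finset.le_sup (f := fun p : V × V => G.dist p.1 p.2) (Finset.mem_univ (x, y))
    have hdD' : (G.dist x y : ℝ) ≤ D := by exact_mod_cast hdD
    have hne : ((e x : ℕ) : ℤ) ≠ ((e y : ℕ) : ℤ) := by
      simp only [Ne, Int.natCast_inj]
      intro h
      exact hxy (e.injective (Fin.val_injective h))
    have hz : (1 : ℤ) ≤ |((e x : ℕ) : ℤ) - ((e y : ℕ) : ℤ)| :=
      Int.one_le_abs (sub_ne_zero.2 hne)
    have h1 : (1 : ℝ) ≤ |((e x : ℕ) : ℝ) - ((e y : ℕ) : ℝ)| := by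
      exact_mod_cast hz
    have hxlt : ((e x : ℕ) : ℝ) < n := by exact_mod_cast (e x).is_lt
    have hylt : ((e y : ℕ) : ℝ) < n := by exact_mod_cast (e y).is_lt
    have hx0 : (0 : ℝ) ≤ ((e x : ℕ) : ℝ) := by positivity
    have hy0 : (0 : ℝ) ≤ ((e y : ℕ) : ℝ) := by positivity
    have hub : |((e x : ℕ) : ℝ) - ((e y : ℕ) : ℝ)| ≤ n := by
      rw [abs_le]; constructor <;> linarith
    have habs : |((D : ℝ) + 1) * ((e x : ℕ) : ℝ) - ((D : ℝ) + 1) * ((e y : ℕ) : ℝ)|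
        = ((D : ℝ) + 1) * |((e x : ℕ) : ℝ) - ((e y : ℕ) : ℝ)| := by
      rw [← mul_sub, abs_mul, abs_of_nonneg (by positivity : (0 : ℝ) ≤ (D : ℝ) + 1)]
    constructor
    · rw [habs]
      nlinarith
    · rw [habs]
      have hstep : ((D : ℝ) + 1) * |((e x : ℕ) : ℝ) - ((e y : ℕ) : ℝ)| ≤ ((D : ℝ) + 1) * n :=
        mul_le_mul_of_nonneg_left hub (by positivity)
      have hstep2 : ((D : ℝ) + 1) * n * 1 ≤ ((D : ℝ) + 1) * n * (G.dist x y : ℝ) :=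
        mul_le_mul_of_nonneg_left hdpos' (by positivity)
      push_cast
      nlinarith

theorem stmt10 [Fintype V] (G : SimpleGraph V) (hG : G.Connected) :
    pathBreadth G ≤ (lineDistortion G + 1) / 2 := by
  have hne : {k | ∃ f : V → ℝ, IsLineEmbedding G k f}.Nonempty := by
    obtain ⟨k, f, hf⟩ := exists_embedding G hG
    exact ⟨k, f, hf⟩
  obtain ⟨f, hf⟩ : ∃ f : V → ℝ, IsLineEmbedding G (lineDistortion G) f :=
    Nat.sInf_mem hne
  obtain ⟨q, X, hX, hB⟩ := exists_decomp G hG _ f hf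
  exact Nat.sInf_le ⟨q, X, hX, hB⟩
end

section
/- For every connected finite unweighted graph G there exists a vertex s such that the extended layering L⁺(s,G) of G, which is a path-decomposition of G, has length at most 2·pl(G). -/
open SimpleGraph

variable {V : Type*}

/-- The bags of the extended layering `L⁺(s, G)`: the bag of index `i` is
`L_{i+1} ∪ {v ∈ L_i : v has a neighbor in L_{i+1}}`, where `L_j = {u : d_G(s,u) = j}`. -/
def extLayering (G : SimpleGraph V) (s : V) (i : ℕ) : Set V :=
  {u | G.dist s u = i + 1} ∪
  {v | G.dist s v = i ∧ ∃ u, G.Adj v u ∧ G.dist s u = i + 1}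

theorem stmt13 [Fintype V] (G : SimpleGraph V) (hG : G.Connected)
    (hV : 1 < Fintype.card V) :
    ∃ s : V,
      (∀ v : V, ∃ i : ℕ, v ∈ extLayering G s i) ∧
      (∀ u v : V, G.Adj u v → ∃ i : ℕ, u ∈ extLayering G s i ∧ v ∈ extLayering G s i) ∧
      (∀ i j k : ℕ, i ≤ j → j ≤ k →
        extLayering G s i ∩ extLayering G s k ⊆ extLayering G s j) ∧
      (∀ i : ℕ, ∀ u ∈ extLayering G s i, ∀ v ∈ extLayering G s i,
        G.dist u v ≤ 2 * pathLength G) := by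
    classical
  have hne : Nonempty V := hG.nonempty
  -- the set of achievable lengths is nonempty
  have hSne : {l | ∃ (q : ℕ) (X : Fin q → Set V), IsPathDecomp G X ∧ DecompLengthLE G X l}.Nonempty := by
    refine ⟨Fintype.card V, 1, fun _ => Set.univ,
      ⟨fun v => ⟨0, trivial⟩, fun u v _ => ⟨0, trivial, trivial⟩, fun i j k _ _ x _ => trivial⟩, ?_⟩
    intro i u _ v _
    obtain ⟨w⟩ := hG u v
    calc G.dist u v ≤ w.bypass.length := SimpleGraph.dist_le _
      _ ≤ Fintype.card V := le_of_lt w.bypass_isPath.length_lt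
  have hmem : ∃ (q : ℕ) (X : Fin q → Set V),
      IsPathDecomp G X ∧ DecompLengthLE G X (pathLength G) := Nat.sInf_mem hSne
  obtain ⟨q, X, ⟨hXv, hXe, hXc⟩, hlen⟩ := hmem
  -- the set of (ℕ) indices of bags containing a vertex
  set A : V → Set ℕ := fun x => {n | ∃ h : n < q, x ∈ X ⟨n, h⟩} with hA
  have hAne : ∀ x, (A x).Nonempty := by
    intro x
    obtain ⟨i, hi⟩ := hXv x
    exact ⟨i.1, i.2, hi⟩
  have hAbdd : ∀ x, BddAbove (A x) := fun x => ⟨q, fun n hn => le_of_lt hn.1⟩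
  set al : V → ℕ := fun x => sInf (A x) with hal
  set be : V → ℕ := fun x => sSup (A x) with hbe
  have halA : ∀ x, al x ∈ A x := fun x => Nat.sInf_mem (hAne x)
  have hbeA : ∀ x, be x ∈ A x := fun x => Nat.sSup_mem (hAne x) (hAbdd x)
  have hle_al : ∀ x n, n ∈ A x → al x ≤ n := fun x n hn => Nat.sInf_le hn
  have hle_be : ∀ x n, n ∈ A x → n ≤ be x := fun x n hn => le_csSup (hAbdd x) hn
  have hbetween : ∀ x n, al x ≤ n → n ≤ be x → n ∈ A x := by
    intro x n h1 h2
    have hq : n < q := lt_of_le_of_lt h2 (hbeA x).1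
    exact ⟨hq, hXc ⟨al x, (halA x).1⟩ ⟨n, hq⟩ ⟨be x, (hbeA x).1⟩ h1 h2 ⟨(halA x).2, (hbeA x).2⟩⟩
  have hcommon : ∀ x y : V, (∃ m, m ∈ A x ∧ m ∈ A y) → G.dist x y ≤ pathLength G := by
    rintro x y ⟨m, ⟨hm, hx⟩, ⟨hm', hy⟩⟩
    exact hlen ⟨m, hm⟩ x hx y hy
  -- choose s with minimal first bag
  obtain ⟨s, -, hs⟩ := Finset.exists_min_image (Finset.univ : Finset V) al
    ⟨Classical.arbitrary V, Finset.mem_univ _⟩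
  have hs : ∀ x : V, al s ≤ al x := fun x => hs x (Finset.mem_univ x)
  -- crossing lemma
  have cross : ∀ (t : ℕ) (a b : V) (p : G.Walk a b),
      (∃ n ∈ A a, n ≤ t) → (∃ k ∈ A b, t ≤ k) → ∃ z ∈ p.support, t ∈ A z := by
    intro t a b p
    induction p with
    | nil =>
      rintro ⟨n, hn, hnt⟩ ⟨k, hk, htk⟩
      exact ⟨_, by simp, hbetween _ t ((hle_al _ _ hn).trans hnt) (htk.trans (hle_be _ _ hk))⟩
    | @cons a c b h p ih =>
      rintro ⟨n, hn, hnt⟩ hb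
      obtain ⟨m, hma, hmc⟩ := hXe a c h
      by_cases hmt : t ≤ m.1
      · refine ⟨a, by simp, hbetween a t ((hle_al _ _ hn).trans hnt)
          (hmt.trans (hle_be _ _ ⟨m.2, hma⟩))⟩
      · obtain ⟨z, hz, hzt⟩ := ih ⟨m.1, ⟨m.2, hmc⟩, le_of_lt (lt_of_not_ge hmt)⟩ hb
        exact ⟨z, by simp [hz], hzt⟩
  -- key distance lemma
  have key : ∀ (i : ℕ) (a a' b : V), G.dist s a' = i + 1 → (a' = a ∨ G.Adj a a') →
      G.dist s b ≤ i + 1 → be a < al b → G.dist a b ≤ 2 * pathLength G := by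
    intro i a a' b ha' haa' hb hba
    obtain ⟨m, hma, hma'⟩ : ∃ m, m ∈ A a ∧ m ∈ A a' := by
      rcases haa' with rfl | hadj
      · exact ⟨al a', halA a', halA a'⟩
      · obtain ⟨j, hj1, hj2⟩ := hXe a a' hadj
        exact ⟨j.1, ⟨j.2, hj1⟩, ⟨j.2, hj2⟩⟩
    set t := min (be a) (be a') with ht
    have hta : t ∈ A a := hbetween a t
      (le_min (hle_al _ _ (hbeA a)) ((hle_al _ _ hma).trans (hle_be _ _ hma'))) (min_le_left _ _)
    have hta' : t ∈ A a' := hbetween a' t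
      (le_min ((hle_al _ _ hma').trans (hle_be _ _ hma)) (hle_al _ _ (hbeA a'))) (min_le_right _ _)
    obtain ⟨p, hp⟩ := (hG s b).exists_walk_length_eq_dist
    have htb : t ≤ al b := le_of_lt (lt_of_le_of_lt (min_le_left _ _) hba)
    obtain ⟨z, hz, hzt⟩ := cross t s b p
      ⟨al s, halA s, (hs a).trans (hle_al _ _ hta)⟩ ⟨al b, halA b, htb⟩
    have hdaz : G.dist a z ≤ pathLength G := hcommon a z ⟨t, hta, hzt⟩
    have hza' : G.dist z a' ≤ pathLength G := by
      rw [SimpleGraph.dist_comm]; exact hcommon a' z ⟨t, hta', hzt⟩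
    have hsplit : G.dist s z + G.dist z b ≤ G.dist s b := by
      have h1 : G.dist s z ≤ (p.takeUntil z hz).length := SimpleGraph.dist_le _
      have h2 : G.dist z b ≤ (p.dropUntil z hz).length := SimpleGraph.dist_le _
      have h3 : (p.takeUntil z hz).length + (p.dropUntil z hz).length = p.length := by
        rw [← SimpleGraph.Walk.length_append, p.take_spec hz]
      omega
    have htri : G.dist s a' ≤ G.dist s z + G.dist z a' := hG.dist_triangle
    have htri2 : G.dist a b ≤ G.dist a z + G.dist z b := hG.dist_triangle
    omega
  refine ⟨s, ?_, ?_, ?_, ?_⟩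
  · -- every vertex is in some bag
    intro v
    simp only [extLayering, Set.mem_union, Set.mem_setOf_eq]
    by_cases hv : v = s
    · subst hv
      obtain ⟨u, hu⟩ := Fintype.exists_ne_of_one_lt_card hV v
      obtain ⟨w⟩ := hG v u
      cases w with
      | nil => exact absurd rfl hu
      | cons h p =>
        exact ⟨0, Or.inr ⟨SimpleGraph.dist_self, _, h,
          by rw [SimpleGraph.dist_eq_one_iff_adj]; exact h⟩⟩
    · have hd : 0 < G.dist s v := hG.pos_dist_of_ne (fun h => hv h.symm)
      exact ⟨G.dist s v - 1, Or.inl (by omega)⟩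
  · -- edges are covered
    intro u v huv
    simp only [extLayering, Set.mem_union, Set.mem_setOf_eq]
    have huv1 : G.dist u v = 1 := SimpleGraph.dist_eq_one_iff_adj.mpr huv
    have h1 : G.dist s v ≤ G.dist s u + G.dist u v := hG.dist_triangle
    have h2 : G.dist s u ≤ G.dist s v + G.dist v u := hG.dist_triangle
    have h3 : G.dist v u = 1 := SimpleGraph.dist_eq_one_iff_adj.mpr huv.symm
    rcases lt_trichotomy (G.dist s u) (G.dist s v) with h | h | h
    · exact ⟨G.dist s u, Or.inr ⟨rfl, v, huv, by omega⟩, Or.inl (by omega)⟩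
    · have hpos : 0 < G.dist s u := by
        rcases Nat.eq_zero_or_pos (G.dist s u) with h0 | h0
        · exfalso
          have h4 : G.dist u v ≤ G.dist u s + G.dist s v := hG.dist_triangle
          have h5 : G.dist u s = G.dist s u := SimpleGraph.dist_comm
          omega
        · exact h0
      exact ⟨G.dist s u - 1, Or.inl (by omega), Or.inl (by omega)⟩
    · exact ⟨G.dist s v, Or.inl (by omega), Or.inr ⟨rfl, u, huv.symm, by omega⟩⟩
  · -- convexity
    intro i j k hij hjk x hx
    simp only [extLayering, Set.mem_inter_iff, Set.mem_union, Set.mem_setOf_eq] at hx ⊢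
    obtain ⟨hxi, hxk⟩ := hx
    rcases hxi with h1 | ⟨h1, w, hw, hw'⟩ <;> rcases hxk with h2 | ⟨h2, w2, hw2, hw2'⟩
    · exact Or.inl (by omega)
    · have : j = i ∨ j = k := by omega
      rcases this with rfl | rfl
      · exact Or.inl (by omega)
      · exact Or.inr ⟨by omega, w2, hw2, by omega⟩
    · omega
    · exact Or.inr ⟨by omega, w, hw, by omega⟩
  · -- length bound
    intro i u hu v hv
    simp only [extLayering, Set.mem_union, Set.mem_setOf_eq] at hu hv
    have hu' : ∃ u', G.dist s u' = i + 1 ∧ (u' = u ∨ G.Adj u u') := by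
      rcases hu with h | ⟨h, w, hw, hw'⟩
      · exact ⟨u, h, Or.inl rfl⟩
      · exact ⟨w, hw', Or.inr hw⟩
    have hv' : ∃ v', G.dist s v' = i + 1 ∧ (v' = v ∨ G.Adj v v') := by
      rcases hv with h | ⟨h, w, hw, hw'⟩
      · exact ⟨v, h, Or.inl rfl⟩
      · exact ⟨w, hw', Or.inr hw⟩
    have hules : G.dist s u ≤ i + 1 := by rcases hu with h | ⟨h, -⟩ <;> omega
    have hvles : G.dist s v ≤ i + 1 := by rcases hv with h | ⟨h, -⟩ <;> omega
    obtain ⟨u', hu1, hu2⟩ := hu'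
    obtain ⟨v', hv1, hv2⟩ := hv'
    by_cases hcb : ∃ m, m ∈ A u ∧ m ∈ A v
    · have := hcommon u v hcb; omega
    · have hsep : be u < al v ∨ be v < al u := by
        by_contra hcon
        push_neg at hcon
        obtain ⟨h1, h2⟩ := hcon
        exact hcb ⟨max (al u) (al v),
          hbetween u _ (le_max_left _ _) (max_le (hle_be _ _ (halA u)) h1),
          hbetween v _ (le_max_right _ _) (max_le h2 (hle_be _ _ (halA v)))⟩
      rcases hsep with hlt | hlt
      · exact key i u u' v hu1 hu2 hvles hlt
      · rw [SimpleGraph.dist_comm]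
        exact key i v v' u hv1 hv2 hules hlt
end

section
/- For every connected finite unweighted graph G there exists a vertex s such that the extended layering L⁺(s,G) of G, which is a path-decomposition of G, has breadth at most 3·pb(G). -/
open SimpleGraph

variable {V : Type*}

/-- Separator property of path decompositions: any walk from a vertex in a bag with
index `≤ j` to a vertex in a bag with index `≥ j` meets `X j`. -/
lemma sep_lemma {G : SimpleGraph V} {q : ℕ} {X : Fin q → Set V}
    (h3 : ∀ i j k : Fin q, i ≤ j → j ≤ k → X i ∩ X k ⊆ X j)
    (h2 : ∀ u v : V, G.Adj u v → ∃ i, u ∈ X i ∧ v ∈ X i)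
    (j : Fin q) {a b : V} (p : G.Walk a b) :
    ∀ (ia ib : Fin q), a ∈ X ia → b ∈ X ib → ia ≤ j → j ≤ ib →
      ∃ z ∈ p.support, z ∈ X j := by
  induction p with
  | nil =>
    intro ia ib ha hb hle1 hle2
    exact ⟨_, by simp, h3 ia j ib hle1 hle2 ⟨ha, hb⟩⟩
  | @cons a a' b h p ih =>
    intro ia ib ha hb hle1 hle2
    obtain ⟨t, hat, ha't⟩ := h2 _ _ h
    by_cases htj : j ≤ t
    · exact ⟨a, by simp, h3 ia j t hle1 htj ⟨ha, hat⟩⟩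
    · obtain ⟨z, hz, hzX⟩ := ih t ib ha't hb (le_of_not_ge htj) hle2
      exact ⟨z, by simp [hz], hzX⟩

lemma dist_split_s14 {G : SimpleGraph V} {a b : V} (p : G.Walk a b)
    {z : V} (hz : z ∈ p.support) : G.dist a z + G.dist z b ≤ p.length := by
  classical
  have h1 := SimpleGraph.dist_le (p.takeUntil z hz)
  have h2 := SimpleGraph.dist_le (p.dropUntil z hz)
  have h3 := congrArg Walk.length (p.take_spec hz)
  rw [Walk.length_append] at h3
  omega

lemma pb_mem [Fintype V] (G : SimpleGraph V) (hG : G.Connected) :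
    ∃ (q : ℕ) (X : Fin q → Set V), IsPathDecomp G X ∧
      DecompBreadthLE G X (pathBreadth G) := by
  have hne : {r | ∃ (q : ℕ) (X : Fin q → Set V),
      IsPathDecomp G X ∧ DecompBreadthLE G X r}.Nonempty := by
    have : Nonempty V := hG.nonempty
    obtain ⟨c⟩ := this
    refine ⟨Finset.univ.sup (fun u => G.dist c u), 1, fun _ => Set.univ, ?_, ?_⟩
    · exact ⟨fun v => ⟨0, trivial⟩, fun u v _ => ⟨0, trivial, trivial⟩,
        fun i j k _ _ _ h => trivial⟩
    · intro i
      exact ⟨c, fun u _ => Finset.le_sup (Finset.mem_univ u)⟩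
  exact Nat.sInf_mem hne

lemma pb_pos [Fintype V] (G : SimpleGraph V) (hG : G.Connected)
    (hV : 1 < Fintype.card V) : 1 ≤ pathBreadth G := by
  obtain ⟨q, X, hPD, hBr⟩ := pb_mem G hG
  by_contra h
  have hr0 : pathBreadth G = 0 := by omega
  -- get an edge
  obtain ⟨u, v, huv⟩ := Fintype.exists_pair_of_one_lt_card hV
  obtain ⟨p, -⟩ := (hG u v).exists_walk_length_eq_dist
  have hadj : ∃ a b : V, G.Adj a b := by
    cases p with
    | nil => exact absurd rfl huv
    | cons h _ => exact ⟨_, _, h⟩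
  obtain ⟨a, b, hab⟩ := hadj
  obtain ⟨i, hai, hbi⟩ := hPD.2.1 a b hab
  obtain ⟨c, hc⟩ := hBr i
  have h1 : G.dist c a = 0 := by have := hc a hai; omega
  have h2 : G.dist c b = 0 := by have := hc b hbi; omega
  rw [hG.dist_eq_zero_iff] at h1 h2
  exact G.ne_of_adj hab (h1 ▸ h2 ▸ rfl)

theorem stmt14 [Fintype V] (G : SimpleGraph V) (hG : G.Connected)
    (hV : 1 < Fintype.card V) :
    ∃ s : V,
      (∀ v : V, ∃ i : ℕ, v ∈ extLayering G s i) ∧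
      (∀ u v : V, G.Adj u v → ∃ i : ℕ, u ∈ extLayering G s i ∧ v ∈ extLayering G s i) ∧
      (∀ i j k : ℕ, i ≤ j → j ≤ k →
        extLayering G s i ∩ extLayering G s k ⊆ extLayering G s j) ∧
      (∀ i : ℕ, ∃ c : V, ∀ u ∈ extLayering G s i, G.dist c u ≤ 3 * pathBreadth G) := by
  classical
  have hNV : Nonempty V := hG.nonempty
  set r := pathBreadth G with hr
  have hr1 : 1 ≤ r := pb_pos G hG hV
  obtain ⟨q, X, hPD, hBr⟩ := pb_mem G hG
  obtain ⟨h1, h2, h3⟩ := hPD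
  -- minimal bag index of each vertex
  have hmin : ∀ v : V, ∃ m : Fin q, v ∈ X m ∧ ∀ i : Fin q, v ∈ X i → m ≤ i := by
    intro v
    obtain ⟨m, hm, hm2⟩ := Set.exists_min_image {i : Fin q | v ∈ X i} id
      (Set.toFinite _) (h1 v)
    exact ⟨m, hm, hm2⟩
  choose f hf hfmin using hmin
  -- choose s minimizing f
  obtain ⟨s, -, hsmin⟩ := Set.exists_min_image (Set.univ : Set V) f
    (Set.toFinite _) ⟨Classical.arbitrary V, trivial⟩
  refine ⟨s, ?_, ?_, ?_, ?_⟩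
  · -- every vertex in some bag
    intro v
    by_cases hv : v = s
    · subst hv
      obtain ⟨t, ht⟩ := Fintype.exists_ne_of_one_lt_card hV v
      obtain ⟨p, hp⟩ := (hG v t).exists_walk_length_eq_dist
      have hlen : 1 ≤ p.length := by
        by_contra h
        interval_cases h' : p.length
        · exact ht (p.eq_of_length_eq_zero h').symm
      obtain ⟨u, hu⟩ : ∃ u, G.Adj v u := by
        cases p with
        | nil => simp at hlen
        | cons h _ => exact ⟨_, h⟩
      refine ⟨0, Or.inr ⟨?_, u, hu, ?_⟩⟩
      · simp [SimpleGraph.dist_self]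
      · exact (G.dist_eq_one_iff_adj).mpr hu
    · have hd : 1 ≤ G.dist s v := hG.pos_dist_of_ne (Ne.symm hv)
      exact ⟨G.dist s v - 1, Or.inl (by simp only [Set.mem_setOf_eq]; omega)⟩
  · -- edges
    intro u v huv
    rcases lt_trichotomy (G.dist s u) (G.dist s v) with h | h | h
    · have hle : G.dist s v ≤ G.dist s u + 1 := by
        have := hG.dist_triangle (u := s) (v := u) (w := v)
        have h2' : G.dist u v ≤ 1 := by
          have := SimpleGraph.dist_le (Walk.cons huv Walk.nil)
          simpa using this
        omega
      have hv : G.dist s v = G.dist s u + 1 := by omega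
      exact ⟨G.dist s u, Or.inr ⟨rfl, v, huv, hv⟩, Or.inl hv⟩
    · -- equal distances; both positive (else u = v = s)
      have hpos : 1 ≤ G.dist s u := by
        by_contra h'
        have hu0 : G.dist s u = 0 := by omega
        have hv0 : G.dist s v = 0 := by omega
        rw [hG.dist_eq_zero_iff] at hu0 hv0
        exact G.ne_of_adj huv (hu0 ▸ hv0 ▸ rfl)
      refine ⟨G.dist s u - 1, Or.inl ?_, Or.inl ?_⟩ <;>
        simp only [Set.mem_setOf_eq] <;> omega
    · have hle : G.dist s u ≤ G.dist s v + 1 := by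
        have := hG.dist_triangle (u := s) (v := v) (w := u)
        have h2' : G.dist v u ≤ 1 := by
          have := SimpleGraph.dist_le (Walk.cons huv.symm Walk.nil)
          simpa using this
        omega
      have hu : G.dist s u = G.dist s v + 1 := by omega
      exact ⟨G.dist s v, Or.inl hu, Or.inr ⟨rfl, u, huv.symm, hu⟩⟩
  · -- interval property
    intro i j k hij hjk u ⟨hui, huk⟩
    have hdi : G.dist s u = i + 1 ∨ G.dist s u = i := by
      rcases hui with h | h
      · exact Or.inl h
      · exact Or.inr h.1
    have hdk : G.dist s u = k + 1 ∨ G.dist s u = k := by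
      rcases huk with h | h
      · exact Or.inl h
      · exact Or.inr h.1
    have : i = k ∨ (k = i + 1 ∧ G.dist s u = i + 1) := by omega
    rcases this with h | ⟨h, hd⟩
    · subst h
      have : j = i := by omega
      subst this; exact hui
    · subst h
      have : j = i ∨ j = i + 1 := by omega
      rcases this with h | h
      · subst h; exact hui
      · subst h; exact huk
  · -- breadth bound
    intro i
    by_cases hex : ∃ w : V, G.dist s w = i + 1
    · obtain ⟨w1, hw1⟩ := hex
      obtain ⟨w0, hw0T, hw0min⟩ := Set.exists_min_image
        {w : V | i + 1 ≤ G.dist s w} f (Set.toFinite _) ⟨w1, hw1.ge⟩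
      set j := f w0 with hj
      obtain ⟨c, hc⟩ := hBr j
      refine ⟨c, ?_⟩
      have hcw0 : G.dist c w0 ≤ r := hc w0 (hf w0)
      -- key lemma applied to any u' at distance i+1 and walk of length i+1
      have key : ∀ (u' : V) (P : G.Walk s u'), G.dist s u' = i + 1 → P.length = i + 1 →
          ∃ z ∈ P.support, G.dist c z ≤ r ∧ i + 1 ≤ G.dist s z + 2 * r := by
        intro u' P hd hlen
        have hju' : j ≤ f u' := hw0min u' hd.ge
        have hsj : f s ≤ j := hsmin w0 trivial
        obtain ⟨z, hzsup, hzX⟩ := sep_lemma h3 h2 j P (f s) (f u') (hf s) (hf u') hsj hju'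
        have hcz : G.dist c z ≤ r := hc z hzX
        have htr1 : G.dist s w0 ≤ G.dist s z + G.dist z w0 := hG.dist_triangle
        have htr2 : G.dist z w0 ≤ G.dist z c + G.dist c w0 := hG.dist_triangle
        have hzc : G.dist z c = G.dist c z := SimpleGraph.dist_comm ..
        have hw0d : i + 1 ≤ G.dist s w0 := hw0T
        exact ⟨z, hzsup, hcz, by omega⟩
      intro u hu
      rcases hu with hd | ⟨hd, u', hadj, hd'⟩
      · -- dist s u = i + 1
        obtain ⟨P, hP⟩ := (hG s u).exists_walk_length_eq_dist
        rw [hd] at hP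
        obtain ⟨z, hzsup, hcz, hzd⟩ := key u P hd hP
        have hsplit : G.dist s z + G.dist z u ≤ P.length := dist_split_s14 P hzsup
        have htr : G.dist c u ≤ G.dist c z + G.dist z u := hG.dist_triangle
        omega
      · -- dist s u = i, neighbor u' at i + 1
        obtain ⟨P0, hP0⟩ := (hG s u).exists_walk_length_eq_dist
        rw [hd] at hP0
        set Q := P0.append (Walk.cons hadj Walk.nil) with hQ
        have hQlen : Q.length = i + 1 := by
          simp [hQ, Walk.length_append, hP0]
        obtain ⟨z, hzsup, hcz, hzd⟩ := key u' Q hd' hQlen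
        rw [hQ, Walk.mem_support_append_iff] at hzsup
        rcases hzsup with hz | hz
        · have hsplit : G.dist s z + G.dist z u ≤ P0.length := dist_split_s14 P0 hz
          have htr : G.dist c u ≤ G.dist c z + G.dist z u := hG.dist_triangle
          omega
        · have hz' : z = u ∨ z = u' := by simpa using hz
          have hdu'u : G.dist u' u ≤ 1 := by
            have := SimpleGraph.dist_le (Walk.cons hadj.symm Walk.nil)
            simpa using this
          rcases hz' with rfl | rfl
          · omega
          · have htr : G.dist c u ≤ G.dist c z + G.dist z u := hG.dist_triangle
            omega
    · refine ⟨Classical.arbitrary V, ?_⟩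
      intro u hu
      exfalso
      rcases hu with hd | ⟨hd, u', hadj, hd'⟩
      · exact hex ⟨u, hd⟩
      · exact hex ⟨u', hd'⟩
end

section
/- If G is a connected permutation graph with at least one edge, then pb(G) = 1 and, therefore, pl(G) ≤ 2. -/
open SimpleGraph

variable {V : Type*}

/-- `G` is a permutation graph: vertices are segments between two parallel lines,
adjacent iff the segments cross. -/
def IsPermutationGraph (G : SimpleGraph V) : Prop :=
  ∃ a b : V → ℝ, Function.Injective a ∧ Function.Injective b ∧
    ∀ u v : V, u ≠ v → (G.Adj u v ↔ (a u - a v) * (b u - b v) < 0)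

/-! Every vertex `v` is a point `(a v, b v)` of the plane, and two vertices are adjacent iff one
lies strictly northwest of the other. The bags are the closed northwest quadrants of the vertices
with an empty southeast quadrant, ordered from west to east: each bag is dominated by its
apex, and along these apexes `b` increases together with `a`, which gives the interval property.
Dominated bags have breadth `1`, hence length at most `2`, and breadth `0` is impossible as soon
as there is an edge. -/

section PathDecomposition

variable {G : SimpleGraph V}

theorem isPathDecomp_comp_orderIso {ι : Type*} [Preorder ι] {q : ℕ} (e : Fin q ≃o ι)
    (Y : ι → Set V) (hcover : ∀ v, ∃ x, v ∈ Y x)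
    (hadj : ∀ u v, G.Adj u v → ∃ x, u ∈ Y x ∧ v ∈ Y x)
    (hinter : ∀ x y z, x ≤ y → y ≤ z → Y x ∩ Y z ⊆ Y y) :
    IsPathDecomp G (Y ∘ e) := by
  refine ⟨fun v => ?_, fun u v huv => ?_, fun i j k hij hjk => hinter _ _ _ (e.monotone hij)
    (e.monotone hjk)⟩
  · obtain ⟨x, hx⟩ := hcover v
    exact ⟨e.symm x, by simpa using hx⟩
  · obtain ⟨x, hux, hvx⟩ := hadj u v huv
    exact ⟨e.symm x, by simpa using hux, by simpa using hvx⟩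

variable {q : ℕ} {X : Fin q → Set V} {r : ℕ}

theorem DecompBreadthLE.decompLengthLE (hG : G.Connected) (h : DecompBreadthLE G X r) :
    DecompLengthLE G X (2 * r) := by
  intro i u hu v hv
  obtain ⟨c, hc⟩ := h i
  calc G.dist u v ≤ G.dist u c + G.dist c v := hG.dist_triangle
    _ = G.dist c u + G.dist c v := by rw [dist_comm]
    _ ≤ 2 * r := by linarith [hc u hu, hc v hv]

theorem DecompBreadthLE.pos (hG : G.Connected) {u v : V} (huv : G.Adj u v)
    (hX : IsPathDecomp G X) (h : DecompBreadthLE G X r) : 0 < r := by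
  obtain ⟨i, hu, hv⟩ := hX.2.1 u v huv
  obtain ⟨c, hc⟩ := h i
  by_contra! hr
  have hcu : c = u := hG.dist_eq_zero_iff.mp (by linarith [hc u hu])
  have hcv : c = v := hG.dist_eq_zero_iff.mp (by linarith [hc v hv])
  exact huv.ne (hcu.symm.trans hcv)

end PathDecomposition

section PlaneQuadrants

variable (a b : V → ℝ)

def nwQuadrant (x : V) : Set V := {v | a v ≤ a x ∧ b x ≤ b v}

def IsSoutheastMaximal (x : V) : Prop := ∀ v, a x < a v → b x < b v

variable {a b}

theorem exists_isSoutheastMaximal_mem_nwQuadrant [Finite V] (v : V) :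
    ∃ x, IsSoutheastMaximal a b x ∧ v ∈ nwQuadrant a b x := by
  obtain ⟨x, hxv, hmax⟩ := Set.exists_max_image {w | b w ≤ b v} a (Set.toFinite _)
    ⟨v, le_refl (b v)⟩
  refine ⟨x, fun w hw => ?_, hmax v (le_refl (b v)), hxv⟩
  by_contra! hbw
  exact (hmax w (hbw.trans hxv)).not_gt hw

theorem IsSoutheastMaximal.le_of_le (ha : Function.Injective a) {x y : V}
    (hx : IsSoutheastMaximal a b x) (hxy : a x ≤ a y) : b x ≤ b y := by
  rcases hxy.eq_or_lt with h | h
  · rw [ha h]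
  · exact (hx y h).le

theorem nwQuadrant_inter_subset (ha : Function.Injective a) {x y z : V}
    (hy : IsSoutheastMaximal a b y) (hxy : a x ≤ a y) (hyz : a y ≤ a z) :
    nwQuadrant a b x ∩ nwQuadrant a b z ⊆ nwQuadrant a b y :=
  fun _ ⟨⟨hax, _⟩, ⟨_, hbz⟩⟩ => ⟨hax.trans hxy, (hy.le_of_le ha hyz).trans hbz⟩

variable {G : SimpleGraph V}

theorem dist_le_one_of_mem_nwQuadrant
    (hG : ∀ u v : V, u ≠ v → (G.Adj u v ↔ (a u - a v) * (b u - b v) < 0))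
    (ha : Function.Injective a) (hb : Function.Injective b) {x v : V}
    (hv : v ∈ nwQuadrant a b x) : G.dist x v ≤ 1 := by
  rcases eq_or_ne v x with rfl | hvx
  · simp
  refine (dist_eq_one_iff_adj.mpr ((hG x v hvx.symm).mpr ?_)).le
  have hav : a v < a x := hv.1.lt_of_ne (ha.ne hvx)
  have hbv : b x < b v := hv.2.lt_of_ne (hb.ne hvx.symm)
  nlinarith

theorem exists_isSoutheastMaximal_adj_mem_nwQuadrant [Finite V]
    (hG : ∀ u v : V, u ≠ v → (G.Adj u v ↔ (a u - a v) * (b u - b v) < 0))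
    {u v : V} (huv : G.Adj u v) :
    ∃ x, IsSoutheastMaximal a b x ∧ u ∈ nwQuadrant a b x ∧ v ∈ nwQuadrant a b x := by
  have of_southeast : ∀ u v, a v < a u → b u < b v →
      ∃ x, IsSoutheastMaximal a b x ∧ u ∈ nwQuadrant a b x ∧ v ∈ nwQuadrant a b x := by
    intro u v hav hbu
    obtain ⟨x, hx, hux, hbx⟩ := exists_isSoutheastMaximal_mem_nwQuadrant (a := a) (b := b) u
    exact ⟨x, hx, ⟨hux, hbx⟩, hav.le.trans hux, hbx.trans hbu.le⟩
  rcases mul_neg_iff.mp ((hG u v huv.ne).mp huv) with ⟨hau, hbu⟩ | ⟨hau, hbu⟩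
  · exact of_southeast u v (by linarith) (by linarith)
  · obtain ⟨x, hx, hvx, hux⟩ := of_southeast v u (by linarith) (by linarith)
    exact ⟨x, hx, hux, hvx⟩

end PlaneQuadrants

theorem IsPermutationGraph.exists_isPathDecomp_decompBreadthLE_one [Finite V]
    {G : SimpleGraph V} (h : IsPermutationGraph G) :
    ∃ (q : ℕ) (X : Fin q → Set V), IsPathDecomp G X ∧ DecompBreadthLE G X 1 := by
  obtain ⟨a, b, ha, hb, hG⟩ := h
  let ι := {x // IsSoutheastMaximal a b x}
  let : LinearOrder ι := LinearOrder.lift' (a ∘ Subtype.val) (ha.comp Subtype.val_injective)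
  have : Fintype ι := Fintype.ofFinite ι
  let Y : ι → Set V := fun x => nwQuadrant a b x.1
  refine ⟨_, Y ∘ monoEquivOfFin ι rfl, isPathDecomp_comp_orderIso _ Y ?_ ?_ ?_, fun i =>
    ⟨_, fun u hu => dist_le_one_of_mem_nwQuadrant hG ha hb hu⟩⟩
  · intro v
    obtain ⟨x, hx, hv⟩ := exists_isSoutheastMaximal_mem_nwQuadrant (a := a) (b := b) v
    exact ⟨⟨x, hx⟩, hv⟩
  · intro u v huv
    obtain ⟨x, hx, hu, hv⟩ := exists_isSoutheastMaximal_adj_mem_nwQuadrant hG huv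
    exact ⟨⟨x, hx⟩, hu, hv⟩
  · intro x y z hxy hyz
    exact nwQuadrant_inter_subset ha y.2 hxy hyz

theorem stmt15 [Fintype V] (G : SimpleGraph V) (hG : G.Connected)
    (hperm : IsPermutationGraph G) (hedge : ∃ u v : V, G.Adj u v) :
    pathBreadth G = 1 ∧ pathLength G ≤ 2 := by
  obtain ⟨q, X, hX, hbr⟩ := hperm.exists_isPathDecomp_decompBreadthLE_one
  obtain ⟨u, v, huv⟩ := hedge
  refine ⟨le_antisymm (Nat.sInf_le ⟨q, X, hX, hbr⟩) ?_,
    Nat.sInf_le ⟨q, X, hX, hbr.decompLengthLE hG⟩⟩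
  exact le_csInf ⟨1, q, X, hX, hbr⟩ fun _ ⟨_, _, hX', hbr'⟩ => hbr'.pos hG huv hX'
end

section
/- If G is a connected cocomparability graph, then pb(G) ≤ pl(G) ≤ 2. -/
open SimpleGraph

variable {V : Type*}

/-- `G` is a cocomparability graph: it has a linear ordering of its vertices such that
for all `u < v < w`, if `u` and `w` are adjacent then `v` is adjacent to `u` or `w`. -/
def IsCocomparabilityGraph (G : SimpleGraph V) [Fintype V] : Prop :=
  ∃ f : V ≃ Fin (Fintype.card V), ∀ u v w : V,
    f u < f v → f v < f w → G.Adj u w → (G.Adj v u ∨ G.Adj v w)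

lemma aux_dist_le_two [Fintype V] (G : SimpleGraph V) (hG : G.Connected)
    (f : V ≃ Fin (Fintype.card V))
    (hf : ∀ u v w : V, f u < f v → f v < f w → G.Adj u w → (G.Adj v u ∨ G.Adj v w))
    {i : Fin (Fintype.card V)} {u v w : V} (huv : f u < f v) (hvi : f v ≤ i)
    (hiw : i ≤ f w) (huw : u = w ∨ G.Adj u w) : G.dist u v ≤ 2 := by
  rcases huw with rfl | huw
  · exact absurd (hvi.trans hiw) (not_le.mpr huv)
  · rcases eq_or_lt_of_le (hvi.trans hiw) with h | h
    · have : v = w := f.injective (Fin.ext (Fin.val_eq_of_eq h))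
      subst this
      rw [dist_eq_one_iff_adj.mpr huw]; omega
    · rcases hf u v w huv h huw with h1 | h2
      · rw [dist_eq_one_iff_adj.mpr h1.symm]; omega
      · calc G.dist u v ≤ G.dist u w + G.dist w v := hG.dist_triangle
          _ ≤ 1 + 1 := Nat.add_le_add (le_of_eq (dist_eq_one_iff_adj.mpr huw))
              (le_of_eq (dist_eq_one_iff_adj.mpr h2.symm))
          _ ≤ 2 := le_refl _

theorem stmt17 [Fintype V] (G : SimpleGraph V) (hG : G.Connected)
    (hco : IsCocomparabilityGraph G) :
    pathBreadth G ≤ pathLength G ∧ pathLength G ≤ 2 := by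
  obtain ⟨f, hf⟩ := hco
  set X : Fin (Fintype.card V) → Set V :=
    fun i => {u | f u ≤ i ∧ ∃ w, i ≤ f w ∧ (u = w ∨ G.Adj u w)} with hX
  have hpd : IsPathDecomp G X := by
    refine ⟨fun v => ⟨f v, le_refl _, v, le_refl _, Or.inl rfl⟩, ?_, ?_⟩
    · intro u v huv
      rcases le_total (f u) (f v) with h | h
      · exact ⟨f v, ⟨h, v, le_refl _, Or.inr huv⟩, le_refl _, v, le_refl _, Or.inl rfl⟩
      · exact ⟨f u, ⟨le_refl _, u, le_refl _, Or.inl rfl⟩, h, u, le_refl _, Or.inr huv.symm⟩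
    · rintro i j k hij hjk x ⟨⟨hxi, _⟩, _, w, hkw, hxw⟩
      exact ⟨hxi.trans hij, w, hjk.trans hkw, hxw⟩
  have hlen : DecompLengthLE G X 2 := by
    rintro i u ⟨hui, w, hiw, huw⟩ v ⟨hvi, w', hiw', hvw'⟩
    rcases lt_trichotomy (f u) (f v) with h | h | h
    · exact aux_dist_le_two G hG f hf h hvi hiw huw
    · have : u = v := f.injective (Fin.ext (Fin.val_eq_of_eq h))
      subst this; rw [G.dist_self]; omega
    · rw [G.dist_comm]; exact aux_dist_le_two G hG f hf h hui hiw' hvw'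
  have hmem : 2 ∈ {l | ∃ (q : ℕ) (X : Fin q → Set V), IsPathDecomp G X ∧ DecompLengthLE G X l} :=
    ⟨_, X, hpd, hlen⟩
  have hplle : pathLength G ≤ 2 := Nat.sInf_le hmem
  refine ⟨?_, hplle⟩
  -- breadth ≤ length
  have hne : {l | ∃ (q : ℕ) (X : Fin q → Set V), IsPathDecomp G X ∧ DecompLengthLE G X l}.Nonempty :=
    ⟨2, hmem⟩
  have hmin := Nat.sInf_mem hne
  obtain ⟨q, Y, hY, hYlen⟩ := hmin
  apply Nat.sInf_le
  refine ⟨q, Y, hY, ?_⟩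
  intro i
  by_cases h : (Y i).Nonempty
  · obtain ⟨c, hc⟩ := h
    exact ⟨c, fun u hu => hYlen i c hc u hu⟩
  · obtain ⟨v⟩ := hG.nonempty
    exact ⟨v, fun u hu => absurd ⟨u, hu⟩ h⟩
end
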